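/- arXiv:1807.11170 — 2 statements merged into one kernel-verified Lean document; each statement's English description precedes it below -/
import Mathlib

section
/- Let U_ε be a solution of problem (N*) for some ε > 0. If 0 < A < B, then U_ε'(r) ≤ 0 for all r ∈ [0,R] (so U_ε is monotonically decreasing, attaining its maximum at r = 0 and its minimum at r = R) and 0 < U_ε(0) ≤ (1/q) log(B/A). If 0 < B < A, then U_ε'(r) ≥ 0 for all r ∈ [0,R] (so U_ε is monotonically increasing, attaining its minimum at r = 0 and its maximum at r = R) and −(1/p) log(A/B) ≤ U_ε(0) < 0. -/
open Real MeasureTheory Set Filter Topology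

noncomputable section

/-- The non-local coefficient `∫₀^R s^(N-1) exp (c * U s) ds`. -/
def intExp (N : ℕ) (R c : ℝ) (U : ℝ → ℝ) : ℝ :=
  ∫ s in (0:ℝ)..R, s ^ (N - 1) * Real.exp (c * U s)

/-- The net charge density `ρ_ε`. -/
def rho (N : ℕ) (R A B p q : ℝ) (U : ℝ → ℝ) (r : ℝ) : ℝ :=
  -(R ^ N / (N : ℝ)) * (A * Real.exp (p * U r) / intExp N R p U
      - B * Real.exp (-q * U r) / intExp N R (-q) U)

/-- Problem (N*): `U` is `C¹` on `[0,R]`, `C^∞` on `(0,R)`, satisfies the non-local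
radially symmetric CCPB equation, the zero-average constraint, and the Neumann-type
boundary conditions. -/
structure IsSolNStar (N : ℕ) (R A B p q : ℝ) (g : ℝ → ℝ) (ε : ℝ) (U : ℝ → ℝ) : Prop where
  contDiffOn_one : ContDiffOn ℝ 1 U (Icc 0 R)
  contDiffOn_top : ContDiffOn ℝ (⊤ : ℕ∞) U (Ioo 0 R)
  eqn : ∀ r ∈ Ioo (0:ℝ) R,
    ε ^ 2 * g r *
        (deriv (deriv U) r + (((N : ℝ) - 1) / r + deriv g r / g r) * deriv U r)
      = R ^ N / (N : ℝ) *
          (A * Real.exp (p * U r) / intExp N R p U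
            - B * Real.exp (-q * U r) / intExp N R (-q) U)
  avg : (∫ s in (0:ℝ)..R, s ^ (N - 1) * U s) = 0
  bc0 : deriv U 0 = 0
  bcR : deriv U R = R * (A - B) / (ε ^ 2 * (N : ℝ) * g R)

def Fn (N : ℕ) (R A B p q : ℝ) (U : ℝ → ℝ) (r : ℝ) : ℝ :=
  A * Real.exp (p * U r) / intExp N R p U - B * Real.exp (-q * U r) / intExp N R (-q) U

theorem intExp_integrand_continuousOn {N : ℕ} {R : ℝ} (c : ℝ) {U : ℝ → ℝ}
    (hUc : ContinuousOn U (Icc 0 R)) :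
    ContinuousOn (fun s => s ^ (N - 1) * Real.exp (c * U s)) (Icc 0 R) :=
  (continuousOn_pow _).mul (Real.continuous_exp.comp_continuousOn (continuousOn_const.mul hUc))

theorem intExp_pos {N : ℕ} {R : ℝ} (hR : 0 < R) (c : ℝ) {U : ℝ → ℝ}
    (hUc : ContinuousOn U (Icc 0 R)) : 0 < intExp N R c U := by
  apply intervalIntegral.intervalIntegral_pos_of_pos_on
  · exact ((intExp_integrand_continuousOn c hUc).mono (by rw [uIcc_of_le hR.le])).intervalIntegrable
  · intro x hx
    exact mul_pos (pow_pos hx.1 _) (Real.exp_pos _)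
  · exact hR

theorem Fn_continuousOn {N : ℕ} {R : ℝ} (A B p q : ℝ) {U : ℝ → ℝ}
    (hUc : ContinuousOn U (Icc 0 R)) : ContinuousOn (Fn N R A B p q U) (Icc 0 R) := by
  unfold Fn
  apply ContinuousOn.sub
  · exact (continuousOn_const.mul
      (Real.continuous_exp.comp_continuousOn (continuousOn_const.mul hUc))).div_const _
  · exact (continuousOn_const.mul
      (Real.continuous_exp.comp_continuousOn (continuousOn_const.mul hUc))).div_const _

theorem Fn_lt_Fn {N : ℕ} {R A B p q : ℝ} (hR : 0 < R) (hA : 0 < A) (hB : 0 < B)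
    (hp : 0 < p) (hq : 0 < q) {U : ℝ → ℝ} (hUc : ContinuousOn U (Icc 0 R))
    {x y : ℝ} (hxy : U x < U y) : Fn N R A B p q U x < Fn N R A B p q U y := by
  have h1 := intExp_pos (N := N) hR p hUc
  have h2 := intExp_pos (N := N) hR (-q) hUc
  unfold Fn
  have e1 : A * Real.exp (p * U x) < A * Real.exp (p * U y) := by
    have := Real.exp_lt_exp.2 (mul_lt_mul_of_pos_left hxy hp)
    exact mul_lt_mul_of_pos_left this hA
  have e2 : B * Real.exp (-q * U y) < B * Real.exp (-q * U x) := by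
    have : -q * U y < -q * U x := by nlinarith
    exact mul_lt_mul_of_pos_left (Real.exp_lt_exp.2 this) hB
  have d1 := div_lt_div_of_pos_right e1 h1
  have d2 := div_lt_div_of_pos_right e2 h2
  linarith

def Wf (N : ℕ) (R : ℝ) (g : ℝ → ℝ) (ε : ℝ) (U : ℝ → ℝ) (r : ℝ) : ℝ :=
  ε ^ 2 * r ^ (N - 1) * g r * derivWithin U (Icc 0 R) r

theorem W_hasDerivAt {N : ℕ} (hN : 2 ≤ N) {R A B p q : ℝ} (hR : 0 < R)
    {g : ℝ → ℝ} (hg : ContDiff ℝ (⊤ : ℕ∞) g) (hgpos : ∀ r ∈ Icc (0:ℝ) R, 0 < g r)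
    {ε : ℝ} {U : ℝ → ℝ} (hU : IsSolNStar N R A B p q g ε U)
    {r : ℝ} (hr : r ∈ Ioo (0:ℝ) R) :
    HasDerivAt (Wf N R g ε U) (r ^ (N - 1) * (R ^ N / (N : ℝ) * Fn N R A B p q U r)) r := by
  set k := N - 1 with hk
  have hk1 : 1 ≤ k := by omega
  have hkc : (k : ℝ) = (N : ℝ) - 1 := by
    rw [hk]; push_cast [Nat.cast_sub (by omega : 1 ≤ N)]; ring
  have hr0 : (0:ℝ) < r := hr.1
  have hrne : r ≠ 0 := ne_of_gt hr0
  have hgr : g r ≠ 0 := ne_of_gt (hgpos r ⟨hr0.le, hr.2.le⟩)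
  -- U' differentiable at r
  have hUsm : ContDiffOn ℝ 1 (deriv U) (Ioo 0 R) :=
    hU.contDiffOn_top.deriv_of_isOpen isOpen_Ioo (by
      rw [show (1 : WithTop ℕ∞) + 1 = ((2 : ℕ∞) : WithTop ℕ∞) by norm_num]; exact WithTop.coe_le_coe.2 le_top)
  have hU'' : HasDerivAt (deriv U) (deriv (deriv U) r) r := by
    have : DifferentiableAt ℝ (deriv U) r :=
      ((hUsm.differentiableOn one_ne_zero) r hr).differentiableAt (isOpen_Ioo.mem_nhds hr)
    exact this.hasDerivAt
  have hU' : HasDerivAt U (deriv U r) r := by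
    have : DifferentiableAt ℝ U r :=
      ((hU.contDiffOn_top.differentiableOn (by simp)) r hr).differentiableAt
        (isOpen_Ioo.mem_nhds hr)
    exact this.hasDerivAt
  have hg' : HasDerivAt g (deriv g r) r := (hg.differentiable (by simp) r).hasDerivAt
  -- derivative of the auxiliary function
  have hP : HasDerivAt (fun x : ℝ => ε ^ 2 * x ^ k) (ε ^ 2 * ((k : ℝ) * r ^ (k - 1))) r :=
    (hasDerivAt_pow k r).const_mul _
  have hPQ : HasDerivAt (fun x : ℝ => ε ^ 2 * x ^ k * g x)
      (ε ^ 2 * ((k : ℝ) * r ^ (k - 1)) * g r + ε ^ 2 * r ^ k * deriv g r) r := hP.mul hg'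
  have hW2 : HasDerivAt (fun x : ℝ => ε ^ 2 * x ^ k * g x * deriv U x)
      ((ε ^ 2 * ((k : ℝ) * r ^ (k - 1)) * g r + ε ^ 2 * r ^ k * deriv g r) * deriv U r
        + ε ^ 2 * r ^ k * g r * deriv (deriv U) r) r := hPQ.mul hU''
  -- the derivative value equals the claimed one, via the equation
  have heq := hU.eqn r hr
  have hpow : r ^ k = r ^ (k - 1) * r := by
    conv_lhs => rw [show k = (k - 1) + 1 by omega]
    rw [pow_succ]
  have hval : (ε ^ 2 * ((k : ℝ) * r ^ (k - 1)) * g r + ε ^ 2 * r ^ k * deriv g r) * deriv U r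
        + ε ^ 2 * r ^ k * g r * deriv (deriv U) r
      = r ^ k * (R ^ N / (N : ℝ) * Fn N R A B p q U r) := by
    have : r ^ k * (R ^ N / (N : ℝ) *
        (A * Real.exp (p * U r) / intExp N R p U
          - B * Real.exp (-q * U r) / intExp N R (-q) U))
        = r ^ k * (ε ^ 2 * g r *
          (deriv (deriv U) r + (((N : ℝ) - 1) / r + deriv g r / g r) * deriv U r)) := by
      rw [heq]
    rw [Fn, this, ← hkc]
    rw [hpow]
    field_simp
    ring
  rw [← hval]
  -- transfer from the auxiliary function to Wf via local equality
  apply hW2.congr_of_eventuallyEq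
  apply Filter.eventuallyEq_of_mem (isOpen_Ioo.mem_nhds hr)
  intro x hx
  have : derivWithin U (Icc 0 R) x = deriv U x :=
    derivWithin_of_mem_nhds (Icc_mem_nhds hx.1 hx.2)
  simp only [Wf, this, hk]

theorem W_continuousOn {N : ℕ} {R A B p q : ℝ} (hR : 0 < R)
    {g : ℝ → ℝ} (hg : ContDiff ℝ (⊤ : ℕ∞) g) {ε : ℝ} {U : ℝ → ℝ}
    (hU : IsSolNStar N R A B p q g ε U) : ContinuousOn (Wf N R g ε U) (Icc 0 R) := by
  have h1 : ContinuousOn (derivWithin U (Icc 0 R)) (Icc 0 R) :=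
    hU.contDiffOn_one.continuousOn_derivWithin (uniqueDiffOn_Icc hR) le_rfl
  exact ((continuousOn_const.mul (continuousOn_pow _)).mul hg.continuous.continuousOn).mul h1

theorem W_zero {N : ℕ} (hN : 2 ≤ N) {R : ℝ} (g : ℝ → ℝ) (ε : ℝ) (U : ℝ → ℝ) :
    Wf N R g ε U 0 = 0 := by
  have : (0:ℝ) ^ (N - 1) = 0 := zero_pow (by omega)
  simp [Wf, this]

theorem U_diffAt_R {N : ℕ} {R A B p q : ℝ} (hR : 0 < R) (hABne : A ≠ B)
    {g : ℝ → ℝ} (hgpos : ∀ r ∈ Icc (0:ℝ) R, 0 < g r) {ε : ℝ} (hε : 0 < ε)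
    (hN : 2 ≤ N) {U : ℝ → ℝ} (hU : IsSolNStar N R A B p q g ε U) :
    DifferentiableAt ℝ U R := by
  by_contra h
  have h0 := deriv_zero_of_not_differentiableAt h
  rw [hU.bcR] at h0
  have hgR : (0:ℝ) < g R := hgpos R ⟨hR.le, le_rfl⟩
  have hNne : (N:ℝ) ≠ 0 := by positivity
  have hden : ε ^ 2 * (N:ℝ) * g R ≠ 0 := by positivity
  have : R * (A - B) = 0 := by
    rcases div_eq_zero_iff.1 h0 with h' | h'
    · exact h'
    · exact absurd h' hden
  have := mul_eq_zero.1 this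
  rcases this with h' | h'
  · exact absurd h' (ne_of_gt hR)
  · exact hABne (by linarith)

theorem W_at_R {N : ℕ} (hN : 2 ≤ N) {R A B p q : ℝ} (hR : 0 < R) (hABne : A ≠ B)
    {g : ℝ → ℝ} (hgpos : ∀ r ∈ Icc (0:ℝ) R, 0 < g r) {ε : ℝ} (hε : 0 < ε)
    {U : ℝ → ℝ} (hU : IsSolNStar N R A B p q g ε U) :
    Wf N R g ε U R = R ^ N * (A - B) / (N : ℝ) := by
  have hdiff := U_diffAt_R hR hABne hgpos hε hN hU
  have hgR : (0:ℝ) < g R := hgpos R ⟨hR.le, le_rfl⟩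
  have h1 : derivWithin U (Icc 0 R) R = deriv U R :=
    hdiff.derivWithin ((uniqueDiffOn_Icc hR) R ⟨hR.le, le_rfl⟩)
  have hNne : (N:ℝ) ≠ 0 := by positivity
  have hpow : R ^ (N - 1) * R = R ^ N := by
    conv_rhs => rw [show N = (N - 1) + 1 by omega]
    rw [pow_succ]
  rw [Wf, h1, hU.bcR]
  field_simp
  rw [← hpow]

theorem W_eq_integral {N : ℕ} (hN : 2 ≤ N) {R A B p q : ℝ} (hR : 0 < R)
    {g : ℝ → ℝ} (hg : ContDiff ℝ (⊤ : ℕ∞) g) (hgpos : ∀ r ∈ Icc (0:ℝ) R, 0 < g r)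
    {ε : ℝ} {U : ℝ → ℝ} (hU : IsSolNStar N R A B p q g ε U)
    {r : ℝ} (hr : r ∈ Icc (0:ℝ) R) :
    Wf N R g ε U r
      = ∫ s in (0:ℝ)..r, s ^ (N - 1) * (R ^ N / (N : ℝ) * Fn N R A B p q U s) := by
  have hUc : ContinuousOn U (Icc 0 R) := hU.contDiffOn_one.continuousOn
  rcases eq_or_lt_of_le hr.1 with h0 | h0
  · rw [← h0, intervalIntegral.integral_same, W_zero hN]
  · have hint : ContinuousOn
        (fun s => s ^ (N - 1) * (R ^ N / (N : ℝ) * Fn N R A B p q U s)) (Icc 0 R) :=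
      (continuousOn_pow _).mul (continuousOn_const.mul (Fn_continuousOn A B p q hUc))
    have key := intervalIntegral.integral_eq_sub_of_hasDeriv_right_of_le h0.le
      ((W_continuousOn hR hg hU).mono (Icc_subset_Icc le_rfl hr.2))
      (fun x hx => ((W_hasDerivAt hN hR hg hgpos hU
          ⟨hx.1, lt_of_lt_of_le hx.2 hr.2⟩)).hasDerivWithinAt)
      (((hint.mono (by rw [uIcc_of_le h0.le]; exact Icc_subset_Icc le_rfl hr.2))).intervalIntegrable)
    rw [key, W_zero hN, sub_zero]

theorem W_diff {N : ℕ} (hN : 2 ≤ N) {R A B p q : ℝ} (hR : 0 < R)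
    {g : ℝ → ℝ} (hg : ContDiff ℝ (⊤ : ℕ∞) g) (hgpos : ∀ r ∈ Icc (0:ℝ) R, 0 < g r)
    {ε : ℝ} {U : ℝ → ℝ} (hU : IsSolNStar N R A B p q g ε U)
    {x u : ℝ} (hx : 0 ≤ x) (hxu : x ≤ u) (huR : u ≤ R) :
    Wf N R g ε U u - Wf N R g ε U x
      = ∫ s in x..u, s ^ (N - 1) * (R ^ N / (N : ℝ) * Fn N R A B p q U s) := by
  have hUc : ContinuousOn U (Icc 0 R) := hU.contDiffOn_one.continuousOn
  have hint : ContinuousOn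
      (fun s => s ^ (N - 1) * (R ^ N / (N : ℝ) * Fn N R A B p q U s)) (Icc 0 R) :=
    (continuousOn_pow _).mul (continuousOn_const.mul (Fn_continuousOn A B p q hUc))
  have h1 := W_eq_integral hN hR hg hgpos hU (r := x) ⟨hx, le_trans hxu huR⟩
  have h2 := W_eq_integral hN hR hg hgpos hU (r := u) ⟨le_trans hx hxu, huR⟩
  have hadd := intervalIntegral.integral_add_adjacent_intervals (a := (0:ℝ)) (b := x) (c := u)
    (f := fun s => s ^ (N - 1) * (R ^ N / (N : ℝ) * Fn N R A B p q U s)) (μ := volume)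
    ((hint.mono (by rw [uIcc_of_le hx]; exact Icc_subset_Icc le_rfl (le_trans hxu huR))).intervalIntegrable)
    ((hint.mono (by rw [uIcc_of_le hxu]; exact Icc_subset_Icc hx huR)).intervalIntegrable)
  rw [h1, h2, ← hadd]
  ring

theorem exists_right_neg {N : ℕ} (hN : 2 ≤ N) {R A B p q : ℝ} (hR : 0 < R)
    {g : ℝ → ℝ} (hg : ContDiff ℝ (⊤ : ℕ∞) g) (hgpos : ∀ r ∈ Icc (0:ℝ) R, 0 < g r)
    {ε : ℝ} {U : ℝ → ℝ} (hU : IsSolNStar N R A B p q g ε U)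
    {x y : ℝ} (hx : 0 ≤ x) (hxy : x < y) (hyR : y ≤ R)
    (hF : Fn N R A B p q U x < 0) :
    ∃ u, x < u ∧ u < y ∧ Wf N R g ε U u < Wf N R g ε U x := by
  have hUc : ContinuousOn U (Icc 0 R) := hU.contDiffOn_one.continuousOn
  have hFc : ContinuousOn (Fn N R A B p q U) (Icc 0 R) := Fn_continuousOn A B p q hUc
  have hxm : x ∈ Icc (0:ℝ) R := ⟨hx, le_trans hxy.le hyR⟩
  have hsub : Ico x y ⊆ Icc (0:ℝ) R := fun s hs => ⟨le_trans hx hs.1, le_trans hs.2.le hyR⟩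
  have hmem : (Fn N R A B p q U) ⁻¹' (Iio 0) ∈ 𝓝[Icc (0:ℝ) R] x :=
    (hFc x hxm).preimage_mem_nhdsWithin (Iio_mem_nhds hF)
  have hmem2 : (Fn N R A B p q U) ⁻¹' (Iio 0) ∈ 𝓝[≥] x := by
    rw [← nhdsWithin_Ico_eq_nhdsGE hxy]
    exact nhdsWithin_mono x hsub hmem
  have hmem3 : (Fn N R A B p q U) ⁻¹' (Iio 0) ∩ Ico x y ∈ 𝓝[≥] x :=
    inter_mem hmem2 (Ico_mem_nhdsGE hxy)
  obtain ⟨u, hu1, hu2⟩ := mem_nhdsGE_iff_exists_Icc_subset.1 hmem3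
  have huy : u < y := (hu2 ⟨hu1.le, le_rfl⟩).2.2
  refine ⟨u, hu1, huy, ?_⟩
  have hdiff := W_diff hN hR hg hgpos hU hx hu1.le (le_trans huy.le hyR)
  have hpos : (0:ℝ) < ∫ s in x..u,
      -(s ^ (N - 1) * (R ^ N / (N : ℝ) * Fn N R A B p q U s)) := by
    apply intervalIntegral.intervalIntegral_pos_of_pos_on _ _ hu1
    · apply ContinuousOn.intervalIntegrable
      apply ContinuousOn.neg
      apply ((continuousOn_pow _).mul (continuousOn_const.mul hFc)).mono
      rw [uIcc_of_le hu1.le]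
      exact fun s hs => ⟨le_trans hx hs.1, le_trans hs.2 (le_trans huy.le hyR)⟩
    · intro s hs
      have hs0 : 0 < s := lt_of_le_of_lt hx hs.1
      have hFs : Fn N R A B p q U s < 0 := hu2 ⟨hs.1.le, hs.2.le⟩ |>.1
      have hRN : 0 < R ^ N / (N : ℝ) := by
        apply div_pos (pow_pos hR N); exact_mod_cast (by omega : 0 < N)
      have hprod := mul_pos (pow_pos hs0 (N - 1)) (mul_pos hRN (neg_pos.2 hFs))
      nlinarith [hprod]
  rw [intervalIntegral.integral_neg] at hpos
  linarith [hdiff]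

theorem exists_right_pos {N : ℕ} (hN : 2 ≤ N) {R A B p q : ℝ} (hR : 0 < R)
    {g : ℝ → ℝ} (hg : ContDiff ℝ (⊤ : ℕ∞) g) (hgpos : ∀ r ∈ Icc (0:ℝ) R, 0 < g r)
    {ε : ℝ} {U : ℝ → ℝ} (hU : IsSolNStar N R A B p q g ε U)
    {x y : ℝ} (hx : 0 ≤ x) (hxy : x < y) (hyR : y ≤ R)
    (hF : 0 < Fn N R A B p q U x) :
    ∃ u, x < u ∧ u < y ∧ Wf N R g ε U x < Wf N R g ε U u := by
  have hUc : ContinuousOn U (Icc 0 R) := hU.contDiffOn_one.continuousOn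
  have hFc : ContinuousOn (Fn N R A B p q U) (Icc 0 R) := Fn_continuousOn A B p q hUc
  have hxm : x ∈ Icc (0:ℝ) R := ⟨hx, le_trans hxy.le hyR⟩
  have hsub : Ico x y ⊆ Icc (0:ℝ) R := fun s hs => ⟨le_trans hx hs.1, le_trans hs.2.le hyR⟩
  have hmem : (Fn N R A B p q U) ⁻¹' (Ioi 0) ∈ 𝓝[Icc (0:ℝ) R] x :=
    (hFc x hxm).preimage_mem_nhdsWithin (Ioi_mem_nhds hF)
  have hmem2 : (Fn N R A B p q U) ⁻¹' (Ioi 0) ∈ 𝓝[≥] x := by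
    rw [← nhdsWithin_Ico_eq_nhdsGE hxy]
    exact nhdsWithin_mono x hsub hmem
  have hmem3 : (Fn N R A B p q U) ⁻¹' (Ioi 0) ∩ Ico x y ∈ 𝓝[≥] x :=
    inter_mem hmem2 (Ico_mem_nhdsGE hxy)
  obtain ⟨u, hu1, hu2⟩ := mem_nhdsGE_iff_exists_Icc_subset.1 hmem3
  have huy : u < y := (hu2 ⟨hu1.le, le_rfl⟩).2.2
  refine ⟨u, hu1, huy, ?_⟩
  have hdiff := W_diff hN hR hg hgpos hU hx hu1.le (le_trans huy.le hyR)
  have hpos : (0:ℝ) < ∫ s in x..u,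
      s ^ (N - 1) * (R ^ N / (N : ℝ) * Fn N R A B p q U s) := by
    apply intervalIntegral.intervalIntegral_pos_of_pos_on _ _ hu1
    · apply ContinuousOn.intervalIntegrable
      apply ((continuousOn_pow _).mul (continuousOn_const.mul hFc)).mono
      rw [uIcc_of_le hu1.le]
      exact fun s hs => ⟨le_trans hx hs.1, le_trans hs.2 (le_trans huy.le hyR)⟩
    · intro s hs
      have hs0 : 0 < s := lt_of_le_of_lt hx hs.1
      have hFs : 0 < Fn N R A B p q U s := hu2 ⟨hs.1.le, hs.2.le⟩ |>.1
      have hRN : 0 < R ^ N / (N : ℝ) := by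
        apply div_pos (pow_pos hR N); exact_mod_cast (by omega : 0 < N)
      positivity
  linarith [hdiff]

theorem exists_left_pos {N : ℕ} (hN : 2 ≤ N) {R A B p q : ℝ} (hR : 0 < R)
    {g : ℝ → ℝ} (hg : ContDiff ℝ (⊤ : ℕ∞) g) (hgpos : ∀ r ∈ Icc (0:ℝ) R, 0 < g r)
    {ε : ℝ} {U : ℝ → ℝ} (hU : IsSolNStar N R A B p q g ε U)
    {x y : ℝ} (hy : 0 ≤ y) (hyx : y < x) (hxR : x ≤ R)
    (hF : 0 < Fn N R A B p q U x) :
    ∃ u, y < u ∧ u < x ∧ Wf N R g ε U u < Wf N R g ε U x := by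
  have hUc : ContinuousOn U (Icc 0 R) := hU.contDiffOn_one.continuousOn
  have hFc : ContinuousOn (Fn N R A B p q U) (Icc 0 R) := Fn_continuousOn A B p q hUc
  have hxm : x ∈ Icc (0:ℝ) R := ⟨le_trans hy hyx.le, hxR⟩
  have hsub : Ioc y x ⊆ Icc (0:ℝ) R := fun s hs => ⟨le_trans hy hs.1.le, le_trans hs.2 hxR⟩
  have hmem : (Fn N R A B p q U) ⁻¹' (Ioi 0) ∈ 𝓝[Icc (0:ℝ) R] x :=
    (hFc x hxm).preimage_mem_nhdsWithin (Ioi_mem_nhds hF)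
  have hmem2 : (Fn N R A B p q U) ⁻¹' (Ioi 0) ∈ 𝓝[≤] x := by
    rw [← nhdsWithin_Ioc_eq_nhdsLE hyx]
    exact nhdsWithin_mono x hsub hmem
  have hmem3 : (Fn N R A B p q U) ⁻¹' (Ioi 0) ∩ Ioc y x ∈ 𝓝[≤] x :=
    inter_mem hmem2 (Ioc_mem_nhdsLE hyx)
  obtain ⟨u, hu1, hu2⟩ := mem_nhdsLE_iff_exists_Icc_subset.1 hmem3
  have huy : y < u := (hu2 ⟨le_rfl, hu1.le⟩).2.1
  refine ⟨u, huy, hu1, ?_⟩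
  have hdiff := W_diff hN hR hg hgpos hU (le_trans hy huy.le) hu1.le hxR
  have hpos : (0:ℝ) < ∫ s in u..x,
      s ^ (N - 1) * (R ^ N / (N : ℝ) * Fn N R A B p q U s) := by
    apply intervalIntegral.intervalIntegral_pos_of_pos_on _ _ hu1
    · apply ContinuousOn.intervalIntegrable
      apply ((continuousOn_pow _).mul (continuousOn_const.mul hFc)).mono
      rw [uIcc_of_le hu1.le]
      exact fun s hs => ⟨le_trans hy (le_trans huy.le hs.1), le_trans hs.2 hxR⟩
    · intro s hs
      have hs0 : 0 < s := lt_of_le_of_lt hy (lt_of_lt_of_le huy hs.1.le)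
      have hFs : 0 < Fn N R A B p q U s := hu2 ⟨hs.1.le, hs.2.le⟩ |>.1
      have hRN : 0 < R ^ N / (N : ℝ) := by
        apply div_pos (pow_pos hR N); exact_mod_cast (by omega : 0 < N)
      positivity
  linarith [hdiff]

theorem W_nonpos {N : ℕ} (hN : 2 ≤ N) {R A B p q : ℝ} (hR : 0 < R)
    (hA : 0 < A) (hB : 0 < B) (hp : 0 < p) (hq : 0 < q) (hAB : A < B)
    {g : ℝ → ℝ} (hg : ContDiff ℝ (⊤ : ℕ∞) g) (hgpos : ∀ r ∈ Icc (0:ℝ) R, 0 < g r)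
    {ε : ℝ} (hε : 0 < ε) {U : ℝ → ℝ} (hU : IsSolNStar N R A B p q g ε U) :
    ∀ r ∈ Icc (0:ℝ) R, Wf N R g ε U r ≤ 0 := by
  have hUc : ContinuousOn U (Icc 0 R) := hU.contDiffOn_one.continuousOn
  have hWc : ContinuousOn (Wf N R g ε U) (Icc 0 R) := W_continuousOn hR hg hU
  have hW0 : Wf N R g ε U 0 = 0 := W_zero hN g ε U
  have hWR : Wf N R g ε U R < 0 := by
    rw [W_at_R hN hR (ne_of_lt hAB) hgpos hε hU]
    have hNpos : (0:ℝ) < (N:ℝ) := by exact_mod_cast (by omega : 0 < N)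
    apply div_neg_of_neg_of_pos _ hNpos
    have := pow_pos hR N
    nlinarith
  by_contra hcon
  push_neg at hcon
  obtain ⟨r₀, hr₀mem, hr₀⟩ := hcon
  have hr₀0 : 0 < r₀ := by
    rcases eq_or_lt_of_le hr₀mem.1 with h | h
    · exfalso; rw [← h] at hr₀; linarith
    · exact h
  have hr₀R : r₀ < R := by
    rcases eq_or_lt_of_le hr₀mem.2 with h | h
    · exfalso; rw [h] at hr₀; linarith
    · exact h
  -- first zero of W to the right of r₀
  set S₁ : Set ℝ := Icc r₀ R ∩ (Wf N R g ε U) ⁻¹' (Iic 0) with hS₁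
  have hS₁closed : IsClosed S₁ :=
    (hWc.mono (Icc_subset_Icc hr₀0.le le_rfl)).preimage_isClosed_of_isClosed
      isClosed_Icc isClosed_Iic
  have hS₁ne : S₁.Nonempty := ⟨R, ⟨hr₀R.le, le_rfl⟩, hWR.le⟩
  have hS₁bdd : BddBelow S₁ := ⟨r₀, fun x hx => hx.1.1⟩
  set r₁ := sInf S₁ with hr₁def
  have hr₁mem : r₁ ∈ S₁ := hS₁closed.csInf_mem hS₁ne hS₁bdd
  have hr₁W : Wf N R g ε U r₁ ≤ 0 := hr₁mem.2
  have hr₁ge : r₀ ≤ r₁ := hr₁mem.1.1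
  have hr₁R : r₁ ≤ R := hr₁mem.1.2
  have hr₀r₁ : r₀ < r₁ := by
    rcases eq_or_lt_of_le hr₁ge with h | h
    · exfalso; rw [← h] at hr₁W; linarith
    · exact h
  have hWpos1 : ∀ r, r₀ ≤ r → r < r₁ → 0 < Wf N R g ε U r := by
    intro r h1 h2
    by_contra hc
    push_neg at hc
    have : r ∈ S₁ := ⟨⟨h1, le_trans h2.le hr₁R⟩, hc⟩
    have := csInf_le hS₁bdd this
    linarith
  -- last zero of W to the left of r₀
  set S₂ : Set ℝ := Icc 0 r₀ ∩ (Wf N R g ε U) ⁻¹' (Iic 0) with hS₂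
  have hS₂closed : IsClosed S₂ :=
    (hWc.mono (Icc_subset_Icc le_rfl hr₀R.le)).preimage_isClosed_of_isClosed
      isClosed_Icc isClosed_Iic
  have hS₂ne : S₂.Nonempty := ⟨0, ⟨le_rfl, hr₀0.le⟩, le_of_eq hW0⟩
  have hS₂bdd : BddAbove S₂ := ⟨r₀, fun x hx => hx.1.2⟩
  set a := sSup S₂ with hadef
  have hamem : a ∈ S₂ := hS₂closed.csSup_mem hS₂ne hS₂bdd
  have haW : Wf N R g ε U a ≤ 0 := hamem.2
  have ha0 : 0 ≤ a := hamem.1.1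
  have har₀ : a ≤ r₀ := hamem.1.2
  have har₀' : a < r₀ := by
    rcases eq_or_lt_of_le har₀ with h | h
    · exfalso; rw [h] at haW; linarith
    · exact h
  have hWpos2 : ∀ r, a < r → r ≤ r₀ → 0 < Wf N R g ε U r := by
    intro r h1 h2
    by_contra hc
    push_neg at hc
    have : r ∈ S₂ := ⟨⟨le_trans ha0 h1.le, h2⟩, hc⟩
    have := le_csSup hS₂bdd this
    linarith
  have hWpos : ∀ r ∈ Ioo a r₁, 0 < Wf N R g ε U r := by
    intro r hr
    rcases le_or_gt r r₀ with h | h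
    · exact hWpos2 r hr.1 h
    · exact hWpos1 r h.le hr.2
  -- U is strictly monotone on [a, r₁]
  have har₁ : a < r₁ := lt_trans har₀' hr₀r₁
  have hSM : StrictMonoOn U (Icc a r₁) := by
    apply strictMonoOn_of_deriv_pos (convex_Icc a r₁)
      (hUc.mono (Icc_subset_Icc ha0 hr₁R))
    intro x hx
    rw [interior_Icc] at hx
    have hx0 : 0 < x := lt_of_le_of_lt ha0 hx.1
    have hxR : x < R := lt_of_lt_of_le hx.2 hr₁R
    have hW := hWpos x hx
    have hdw : derivWithin U (Icc 0 R) x = deriv U x :=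
      derivWithin_of_mem_nhds (Icc_mem_nhds hx0 hxR)
    rw [Wf, hdw] at hW
    have hc : 0 < ε ^ 2 * x ^ (N - 1) * g x :=
      mul_pos (mul_pos (by positivity) (pow_pos hx0 _)) (hgpos x ⟨hx0.le, hxR.le⟩)
    by_contra hd
    push_neg at hd
    nlinarith
  have hUlt : U a < U r₁ := hSM ⟨le_rfl, har₁.le⟩ ⟨har₁.le, le_rfl⟩ har₁
  -- Fn r₁ ≤ 0
  have hFr₁ : Fn N R A B p q U r₁ ≤ 0 := by
    by_contra hc
    push_neg at hc
    obtain ⟨u, hu1, hu2, hu3⟩ := exists_left_pos hN hR hg hgpos hU ha0 har₁ hr₁R hc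
    have := hWpos u ⟨hu1, hu2⟩
    linarith
  -- Fn a ≥ 0
  have hFa : 0 ≤ Fn N R A B p q U a := by
    by_contra hc
    push_neg at hc
    obtain ⟨u, hu1, hu2, hu3⟩ := exists_right_neg hN hR hg hgpos hU ha0 har₁ hr₁R hc
    have := hWpos u ⟨hu1, hu2⟩
    linarith
  have := Fn_lt_Fn (N := N) hR hA hB hp hq hUc hUlt
  linarith

open intervalIntegral in
theorem int_pow_eq {N : ℕ} (hN : 2 ≤ N) (R : ℝ) :
    ∫ s in (0:ℝ)..R, s ^ (N - 1) = R ^ N / (N : ℝ) := by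
  rw [integral_pow]
  have h1 : N - 1 + 1 = N := by omega
  rw [h1, zero_pow (by omega : N ≠ 0)]
  have h2 : ((N - 1 : ℕ) : ℝ) + 1 = (N : ℝ) := by
    push_cast [Nat.cast_sub (by omega : 1 ≤ N)]; ring
  rw [h2, sub_zero]

theorem key {N : ℕ} (hN : 2 ≤ N) {R A B p q : ℝ} (hR : 0 < R)
    (hA : 0 < A) (hB : 0 < B) (hp : 0 < p) (hq : 0 < q)
    {g : ℝ → ℝ} (hg : ContDiff ℝ (⊤ : ℕ∞) g) (hgpos : ∀ r ∈ Icc (0:ℝ) R, 0 < g r)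
    {ε : ℝ} (hε : 0 < ε) {U : ℝ → ℝ} (hU : IsSolNStar N R A B p q g ε U)
    (hAB : A < B) :
    (∀ r ∈ Icc (0:ℝ) R, deriv U r ≤ 0) ∧ AntitoneOn U (Icc 0 R) ∧
      (∀ r ∈ Icc (0:ℝ) R, U R ≤ U r ∧ U r ≤ U 0) ∧
      0 < U 0 ∧ U 0 ≤ 1 / q * Real.log (B / A) := by
  have hUc : ContinuousOn U (Icc 0 R) := hU.contDiffOn_one.continuousOn
  have hNpos : (0:ℝ) < (N:ℝ) := by exact_mod_cast (by omega : 0 < N)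
  have hgR : 0 < g R := hgpos R ⟨hR.le, le_rfl⟩
  have hWnp := W_nonpos hN hR hA hB hp hq hAB hg hgpos hε hU
  have hbcRneg : deriv U R < 0 := by
    rw [hU.bcR]
    apply div_neg_of_neg_of_pos
    · nlinarith
    · positivity
  -- 1. deriv U ≤ 0 on [0, R]
  have hderiv : ∀ r ∈ Icc (0:ℝ) R, deriv U r ≤ 0 := by
    intro r hr
    rcases eq_or_lt_of_le hr.1 with h0 | h0
    · rw [← h0, hU.bc0]
    rcases eq_or_lt_of_le hr.2 with hRe | hRe
    · rw [hRe]; exact hbcRneg.le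
    have hW := hWnp r hr
    have hdw : derivWithin U (Icc 0 R) r = deriv U r :=
      derivWithin_of_mem_nhds (Icc_mem_nhds h0 hRe)
    rw [Wf, hdw] at hW
    have hc : 0 < ε ^ 2 * r ^ (N - 1) * g r :=
      mul_pos (mul_pos (by positivity) (pow_pos h0 _)) (hgpos r hr)
    by_contra hd
    push_neg at hd
    nlinarith
  -- 2. U antitone
  have hanti : AntitoneOn U (Icc 0 R) := by
    apply antitoneOn_of_deriv_nonpos (convex_Icc 0 R) hUc
    · rw [interior_Icc]
      exact fun x hx => ((hU.contDiffOn_top.differentiableOn (by simp)) x hx).mono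
        (by intro y hy; exact hy)
    · rw [interior_Icc]
      exact fun x hx => hderiv x ⟨hx.1.le, hx.2.le⟩
  have hbounds : ∀ r ∈ Icc (0:ℝ) R, U R ≤ U r ∧ U r ≤ U 0 :=
    fun r hr => ⟨hanti hr ⟨hR.le, le_rfl⟩ hr.2, hanti ⟨le_rfl, hR.le⟩ hr hr.1⟩
  -- 3. 0 < U 0
  have hcontInt : ContinuousOn (fun s => s ^ (N - 1) * U s) (Icc 0 R) :=
    (continuousOn_pow _).mul hUc
  have hU0pos : 0 < U 0 := by
    by_contra hc
    push_neg at hc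
    have hUR_le : U R ≤ U 0 := (hbounds R ⟨hR.le, le_rfl⟩).2
    rcases eq_or_lt_of_le hUR_le with hcase | hcase
    · -- U constant on [0, R]: contradicts deriv U R < 0
      have hconst : ∀ s ∈ Icc (0:ℝ) R, U s = U 0 := by
        intro s hs
        have h1 := (hbounds s hs).1
        have h2 := (hbounds s hs).2
        rw [hcase] at h1
        exact le_antisymm h2 h1
      have hdiffR := U_diffAt_R hR (ne_of_lt hAB) hgpos hε hN hU
      have hud : UniqueDiffWithinAt ℝ (Icc (0:ℝ) R) R := (uniqueDiffOn_Icc hR) R ⟨hR.le, le_rfl⟩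
      have h1 : derivWithin U (Icc 0 R) R = deriv U R := hdiffR.derivWithin hud
      have h2 : derivWithin U (Icc 0 R) R = 0 := by
        rw [derivWithin_congr hconst (hconst R ⟨hR.le, le_rfl⟩)]
        simp
      rw [h2] at h1
      linarith
    · -- U R < U 0 ≤ 0 : the average cannot vanish
      have hURneg : U R < 0 := lt_of_lt_of_le hcase hc
      have hmem : U ⁻¹' (Iio 0) ∈ 𝓝[Icc (0:ℝ) R] R :=
        (hUc R ⟨hR.le, le_rfl⟩).preimage_mem_nhdsWithin (Iio_mem_nhds hURneg)
      have hmem2 : U ⁻¹' (Iio 0) ∈ 𝓝[≤] R := by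
        rw [← nhdsWithin_Ioc_eq_nhdsLE hR]
        exact nhdsWithin_mono R Ioc_subset_Icc_self hmem
      have hmem3 : U ⁻¹' (Iio 0) ∩ Ioc 0 R ∈ 𝓝[≤] R :=
        inter_mem hmem2 (Ioc_mem_nhdsLE hR)
      obtain ⟨l, hl1, hl2⟩ := mem_nhdsLE_iff_exists_Icc_subset.1 hmem3
      have hl0 : 0 < l := (hl2 ⟨le_rfl, hl1.le⟩).2.1
      have hi1 : IntervalIntegrable (fun s => s ^ (N - 1) * U s) volume 0 l :=
        (hcontInt.mono (by rw [uIcc_of_le hl0.le]; exact Icc_subset_Icc le_rfl hl1.le)).intervalIntegrable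
      have hi2 : IntervalIntegrable (fun s => s ^ (N - 1) * U s) volume l R :=
        (hcontInt.mono (by rw [uIcc_of_le hl1.le]; exact Icc_subset_Icc hl0.le le_rfl)).intervalIntegrable
      have hsplit := intervalIntegral.integral_add_adjacent_intervals hi1 hi2
      have hpart1 : (∫ s in (0:ℝ)..l, s ^ (N - 1) * U s) ≤ 0 := by
        have := intervalIntegral.integral_mono_on hl0.le hi1
          (intervalIntegrable_const (c := (0:ℝ)))
          (fun s hs => by
            have hUs : U s ≤ 0 :=
              le_trans ((hbounds s ⟨hs.1, le_trans hs.2 hl1.le⟩).2) hc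
            have : (0:ℝ) ≤ s ^ (N - 1) := pow_nonneg hs.1 _
            nlinarith)
        simpa using this
      have hpart2 : (∫ s in l..R, s ^ (N - 1) * U s) < 0 := by
        have hpos : (0:ℝ) < ∫ s in l..R, -(s ^ (N - 1) * U s) := by
          apply intervalIntegral.intervalIntegral_pos_of_pos_on hi2.neg _ hl1
          intro s hs
          have hs0 : 0 < s := lt_trans hl0 hs.1
          have hUs : U s < 0 := (hl2 ⟨hs.1.le, hs.2.le⟩).1
          have := pow_pos hs0 (N - 1)
          simp only [Pi.neg_apply]
          nlinarith
        rw [intervalIntegral.integral_neg] at hpos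
        linarith
      rw [hU.avg] at hsplit
      linarith
  -- 4. the upper bound on U 0
  have hFn0 : Fn N R A B p q U 0 ≤ 0 := by
    by_contra hc
    push_neg at hc
    obtain ⟨u, hu1, hu2, hu3⟩ := exists_right_pos hN hR hg hgpos hU le_rfl hR le_rfl hc
    have := hWnp u ⟨hu1.le, hu2.le⟩
    rw [W_zero hN] at hu3
    linarith
  have hIp : 0 < intExp N R p U := intExp_pos hR p hUc
  have hIq : 0 < intExp N R (-q) U := intExp_pos hR (-q) hUc
  have hC : (0:ℝ) < R ^ N / (N : ℝ) := by positivity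
  -- upper bound for intExp p
  have hIp_le : intExp N R p U ≤ R ^ N / (N : ℝ) * Real.exp (p * U 0) := by
    have hint0 : IntervalIntegrable (fun s : ℝ => s ^ (N - 1) * Real.exp (p * U 0)) volume 0 R := by
      apply ContinuousOn.intervalIntegrable
      rw [uIcc_of_le hR.le]
      exact (continuousOn_pow (N-1)).mul continuousOn_const
    have hmono := intervalIntegral.integral_mono_on
      (f := fun s : ℝ => s ^ (N - 1) * Real.exp (p * U s))
      (g := fun s : ℝ => s ^ (N - 1) * Real.exp (p * U 0)) hR.le
      ((intExp_integrand_continuousOn p hUc).mono (by rw [uIcc_of_le hR.le])).intervalIntegrable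
      hint0
      (fun s hs => by
        have h1 : U s ≤ U 0 := (hbounds s hs).2
        have h2 : Real.exp (p * U s) ≤ Real.exp (p * U 0) :=
          Real.exp_le_exp.2 (by nlinarith)
        have h3 : (0:ℝ) ≤ s ^ (N - 1) := pow_nonneg hs.1 _
        exact mul_le_mul_of_nonneg_left h2 h3)
    calc intExp N R p U ≤ ∫ s in (0:ℝ)..R, s ^ (N - 1) * Real.exp (p * U 0) := hmono
      _ = (∫ s in (0:ℝ)..R, s ^ (N - 1)) * Real.exp (p * U 0) :=
          intervalIntegral.integral_mul_const _ _
      _ = R ^ N / (N : ℝ) * Real.exp (p * U 0) := by rw [int_pow_eq hN]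
  -- lower bound for intExp (-q)
  have hIq_ge : R ^ N / (N : ℝ) ≤ intExp N R (-q) U := by
    have hint1 : IntervalIntegrable (fun s : ℝ => s ^ (N - 1)) volume 0 R := by
      apply ContinuousOn.intervalIntegrable
      rw [uIcc_of_le hR.le]
      exact continuousOn_pow (N-1)
    have hint2 : IntervalIntegrable (fun s : ℝ => q * (s ^ (N - 1) * U s)) volume 0 R :=
      ((continuousOn_const.mul hcontInt).mono (by rw [uIcc_of_le hR.le])).intervalIntegrable
    have hmono := intervalIntegral.integral_mono_on hR.le (hint1.sub hint2)
      ((intExp_integrand_continuousOn (-q) hUc).mono (by rw [uIcc_of_le hR.le])).intervalIntegrable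
      (fun s hs => by
        have h3 : (0:ℝ) ≤ s ^ (N - 1) := pow_nonneg hs.1 _
        have hexp : -q * U s + 1 ≤ Real.exp (-q * U s) := Real.add_one_le_exp _
        have : s ^ (N - 1) * (-q * U s + 1) ≤ s ^ (N - 1) * Real.exp (-q * U s) :=
          mul_le_mul_of_nonneg_left hexp h3
        nlinarith)
    have hval : (∫ s in (0:ℝ)..R, (s ^ (N - 1) - q * (s ^ (N - 1) * U s)))
        = R ^ N / (N : ℝ) := by
      rw [intervalIntegral.integral_sub hint1 hint2,
        intervalIntegral.integral_const_mul, hU.avg, int_pow_eq hN]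
      ring
    calc R ^ N / (N : ℝ)
        = ∫ s in (0:ℝ)..R, (s ^ (N - 1) - q * (s ^ (N - 1) * U s)) := hval.symm
      _ ≤ intExp N R (-q) U := hmono
  -- conclude
  have hUB : U 0 ≤ 1 / q * Real.log (B / A) := by
    have h1 : A * Real.exp (p * U 0) / intExp N R p U
        ≤ B * Real.exp (-q * U 0) / intExp N R (-q) U := by
      have := hFn0; unfold Fn at this; linarith
    have h2 : A * Real.exp (p * U 0) * intExp N R (-q) U
        ≤ B * Real.exp (-q * U 0) * intExp N R p U :=
      (div_le_div_iff₀ hIp hIq).1 h1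
    have h3 : A * Real.exp (p * U 0) * (R ^ N / (N : ℝ))
        ≤ B * Real.exp (-q * U 0) * (R ^ N / (N : ℝ) * Real.exp (p * U 0)) := by
      have e1 : A * Real.exp (p * U 0) * (R ^ N / (N : ℝ))
          ≤ A * Real.exp (p * U 0) * intExp N R (-q) U := by
        apply mul_le_mul_of_nonneg_left hIq_ge; positivity
      have e2 : B * Real.exp (-q * U 0) * intExp N R p U
          ≤ B * Real.exp (-q * U 0) * (R ^ N / (N : ℝ) * Real.exp (p * U 0)) := by
        apply mul_le_mul_of_nonneg_left hIp_le; positivity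
      linarith
    have h4 : A ≤ B * Real.exp (-q * U 0) := by
      have hcpos : (0:ℝ) < Real.exp (p * U 0) * (R ^ N / (N : ℝ)) := by positivity
      nlinarith [Real.exp_pos (p * U 0), Real.exp_pos (-q * U 0)]
    have h5 : A * Real.exp (q * U 0) ≤ B := by
      have hee : Real.exp (-q * U 0) * Real.exp (q * U 0) = 1 := by
        rw [← Real.exp_add]; ring_nf; exact Real.exp_zero
      nlinarith [Real.exp_pos (q * U 0)]
    have h6 : Real.exp (q * U 0) ≤ B / A := by
      rw [le_div_iff₀ hA]; linarith
    have h7 : q * U 0 ≤ Real.log (B / A) := by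
      calc q * U 0 = Real.log (Real.exp (q * U 0)) := (Real.log_exp _).symm
        _ ≤ Real.log (B / A) := Real.log_le_log (Real.exp_pos _) h6
    calc U 0 = 1 / q * (q * U 0) := by field_simp
      _ ≤ 1 / q * Real.log (B / A) := by
          apply mul_le_mul_of_nonneg_left h7; positivity
  exact ⟨hderiv, hanti, hbounds, hU0pos, hUB⟩

theorem neg_sol {N : ℕ} {R A B p q : ℝ} {g : ℝ → ℝ} {ε : ℝ} {U : ℝ → ℝ}
    (hU : IsSolNStar N R A B p q g ε U) :
    IsSolNStar N R B A q p g ε (fun x => -U x) := by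
  have hdV : deriv (fun x => -U x) = fun x => -deriv U x := funext fun x => deriv.neg
  have hIq : intExp N R q (fun x => -U x) = intExp N R (-q) U := by
    unfold intExp; congr 1; funext s; rw [mul_neg, ← neg_mul]
  have hIp : intExp N R (-p) (fun x => -U x) = intExp N R p U := by
    unfold intExp; congr 1; funext s; rw [mul_neg, neg_mul, neg_neg]
  constructor
  · exact hU.contDiffOn_one.neg
  · exact hU.contDiffOn_top.neg
  · intro r hr
    have heqn := hU.eqn r hr
    have h2 : deriv (deriv fun x => -U x) r = -deriv (deriv U) r := by
      rw [hdV]; exact deriv.neg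
    rw [h2, hdV, hIq, hIp]
    simp only [mul_neg, neg_mul, neg_neg]
    rw [neg_mul] at heqn
    linarith [heqn]
  · have : (∫ s in (0:ℝ)..R, s ^ (N - 1) * -U s)
        = -∫ s in (0:ℝ)..R, s ^ (N - 1) * U s := by
      rw [← intervalIntegral.integral_neg]; congr 1; funext s; ring
    rw [this, hU.avg, neg_zero]
  · rw [hdV]; simp [hU.bc0]
  · rw [hdV]; simp only []; rw [hU.bcR]; ring

/-- Monotonicity of a solution of problem (N*) and bounds for its value at `r = 0`. -/
theorem stmt4 {N : ℕ} (hN : 2 ≤ N) {R A B p q : ℝ} (hR : 0 < R)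
    (hA : 0 < A) (hB : 0 < B) (hp : 0 < p) (hq : 0 < q)
    (g : ℝ → ℝ) (hg : ContDiff ℝ (⊤ : ℕ∞) g) (hgpos : ∀ r ∈ Icc (0:ℝ) R, 0 < g r)
    (ε : ℝ) (hε : 0 < ε) (U : ℝ → ℝ) (hU : IsSolNStar N R A B p q g ε U) :
    (A < B →
      (∀ r ∈ Icc (0:ℝ) R, deriv U r ≤ 0) ∧ AntitoneOn U (Icc 0 R) ∧
        (∀ r ∈ Icc (0:ℝ) R, U R ≤ U r ∧ U r ≤ U 0) ∧
        0 < U 0 ∧ U 0 ≤ 1 / q * Real.log (B / A)) ∧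
    (B < A →
      (∀ r ∈ Icc (0:ℝ) R, 0 ≤ deriv U r) ∧ MonotoneOn U (Icc 0 R) ∧
        (∀ r ∈ Icc (0:ℝ) R, U 0 ≤ U r ∧ U r ≤ U R) ∧
        -(1 / p) * Real.log (A / B) ≤ U 0 ∧ U 0 < 0) := by
  constructor
  · intro hAB
    exact key hN hR hA hB hp hq hg hgpos hε hU hAB
  · intro hBA
    obtain ⟨h1, h2, h3, h4, h5⟩ :=
      key hN hR hB hA hq hp hg hgpos hε (neg_sol hU) hBA
    refine ⟨?_, ?_, ?_, ?_, ?_⟩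
    · intro r hr
      have := h1 r hr
      rw [show deriv (fun x => -U x) r = -deriv U r from deriv.neg] at this
      linarith
    · intro x hx y hy hxy
      have := h2 hx hy hxy
      simp only [neg_le_neg_iff] at this
      exact this
    · intro r hr
      have := h3 r hr
      constructor <;> linarith [this.1, this.2]
    · have : -U 0 ≤ 1 / p * Real.log (A / B) := h5
      linarith
    · linarith [h4]
end
end

section
/- Assume A ≠ B and suppose that for every ε > 0 a solution U_ε of problem (N*) is given. Then the net charge density ρ_ε converges weakly to the Dirac measure (R(B−A)/N) δ_R concentrated at the boundary point r = R: for every continuous function h : [0,R] → ℝ, ∫₀^R h(r) ρ_ε(r) dr → (R(B−A)/N) h(R) as ε → 0⁺. -/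
open Real MeasureTheory Set Filter Topology

noncomputable section

/-- Minus the net charge density. -/
def Fd (N : ℕ) (R A B p q : ℝ) (U : ℝ → ℝ) (r : ℝ) : ℝ :=
  R ^ N / (N : ℝ) * (A * Real.exp (p * U r) / intExp N R p U
      - B * Real.exp (-q * U r) / intExp N R (-q) U)

/-- Continuous representative of the derivative of `U` on `[0,R]`. -/
def Vd (R : ℝ) (U : ℝ → ℝ) : ℝ → ℝ := derivWithin U (Icc 0 R)

/-- The flux `Ψ(r) = ε² r^(N-1) g(r) U'(r)`. -/
def Psi (N : ℕ) (R ε : ℝ) (g U : ℝ → ℝ) (r : ℝ) : ℝ :=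
  ε ^ 2 * (r ^ (N - 1) * (g r * Vd R U r))

structure Ctx (N : ℕ) (R A B p q : ℝ) (g : ℝ → ℝ) (ε : ℝ) (U : ℝ → ℝ) : Prop where
  hN : 2 ≤ N
  hR : 0 < R
  hA : 0 < A
  hB : 0 < B
  hp : 0 < p
  hq : 0 < q
  hg : ContDiff ℝ (⊤ : ℕ∞) g
  hgpos : ∀ r ∈ Icc (0:ℝ) R, 0 < g r
  hε : 0 < ε
  sol : IsSolNStar N R A B p q g ε U


namespace Ctx

variable {N : ℕ} {R A B p q ε : ℝ} {g U : ℝ → ℝ}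
variable (c : Ctx N R A B p q g ε U)
include c

theorem hNR : (0:ℝ) < N := by
  have : (2:ℝ) ≤ N := by exact_mod_cast c.hN
  linarith

theorem hUcont : ContinuousOn U (Icc 0 R) := c.sol.contDiffOn_one.continuousOn

theorem intExp_pos (co : ℝ) : 0 < intExp N R co U := by
  have hcont : ContinuousOn (fun s => s ^ (N - 1) * Real.exp (co * U s)) (Icc 0 R) := by
    exact (continuous_pow (N-1)).continuousOn.mul
      ((continuousOn_const.mul c.hUcont).rexp)
  apply intervalIntegral.intervalIntegral_pos_of_pos_on
  · exact (hcont.mono (by rw [uIcc_of_le c.hR.le])).intervalIntegrable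
  · intro x hx
    exact mul_pos (pow_pos hx.1 _) (Real.exp_pos _)
  · exact c.hR

theorem Fd_cont : ContinuousOn (Fd N R A B p q U) (Icc 0 R) := by
  unfold Fd
  apply ContinuousOn.mul continuousOn_const
  apply ContinuousOn.sub
  · exact (continuousOn_const.mul ((continuousOn_const.mul c.hUcont).rexp)).div_const _
  · exact (continuousOn_const.mul ((continuousOn_const.mul c.hUcont).rexp)).div_const _

theorem Fd_le_Fd {x y : ℝ} (hxy : U x ≤ U y) :
    Fd N R A B p q U x ≤ Fd N R A B p q U y := by
  unfold Fd
  have hRN : 0 < R ^ N / (N:ℝ) := div_pos (pow_pos c.hR _) c.hNR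
  have h1 : A * Real.exp (p * U x) / intExp N R p U
      ≤ A * Real.exp (p * U y) / intExp N R p U := by
    apply div_le_div_of_nonneg_right ?hle (c.intExp_pos p).le
    case hle =>
      have : p * U x ≤ p * U y := by nlinarith [c.hp]
      exact mul_le_mul_of_nonneg_left (Real.exp_le_exp.2 this) c.hA.le
  have h2 : B * Real.exp (-q * U y) / intExp N R (-q) U
      ≤ B * Real.exp (-q * U x) / intExp N R (-q) U := by
    apply div_le_div_of_nonneg_right ?hle2 (c.intExp_pos (-q)).le
    case hle2 =>
      have : -q * U y ≤ -q * U x := by nlinarith [c.hq]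
      exact mul_le_mul_of_nonneg_left (Real.exp_le_exp.2 this) c.hB.le
  nlinarith

theorem Fd_lt_Fd {x y : ℝ} (hxy : U x < U y) :
    Fd N R A B p q U x < Fd N R A B p q U y := by
  unfold Fd
  have hRN : 0 < R ^ N / (N:ℝ) := div_pos (pow_pos c.hR _) c.hNR
  have h1 : A * Real.exp (p * U x) / intExp N R p U
      < A * Real.exp (p * U y) / intExp N R p U := by
    apply div_lt_div_of_pos_right ?_ (c.intExp_pos p)
    have : p * U x < p * U y := by nlinarith [c.hp]
    exact mul_lt_mul_of_pos_left (Real.exp_lt_exp.2 this) c.hA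
  have h2 : B * Real.exp (-q * U y) / intExp N R (-q) U
      < B * Real.exp (-q * U x) / intExp N R (-q) U := by
    apply div_lt_div_of_pos_right ?_ (c.intExp_pos (-q))
    have : -q * U y < -q * U x := by nlinarith [c.hq]
    exact mul_lt_mul_of_pos_left (Real.exp_lt_exp.2 this) c.hB
  nlinarith

theorem V_cont : ContinuousOn (Vd R U) (Icc 0 R) :=
  c.sol.contDiffOn_one.continuousOn_derivWithin (uniqueDiffOn_Icc c.hR) le_rfl

omit c in
theorem V_eq_deriv {r : ℝ} (hr : r ∈ Ioo 0 R) : Vd R U r = deriv U r :=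
  derivWithin_of_mem_nhds (Icc_mem_nhds hr.1 hr.2)

theorem hasDerivAt_U {r : ℝ} (hr : r ∈ Ioo 0 R) : HasDerivAt U (Vd R U r) r := by
  have h1 : DifferentiableAt ℝ U r := by
    have := (c.sol.contDiffOn_one.differentiableOn one_ne_zero) r (Ioo_subset_Icc_self hr)
    exact this.differentiableAt (Icc_mem_nhds hr.1 hr.2)
  rw [V_eq_deriv hr]
  exact h1.hasDerivAt

theorem hasDerivAt_derivU {r : ℝ} (hr : r ∈ Ioo 0 R) :
    HasDerivAt (deriv U) (deriv (deriv U) r) r := by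
  have h2 : ContDiffOn ℝ 1 (deriv U) (Ioo 0 R) :=
    c.sol.contDiffOn_top.deriv_of_isOpen isOpen_Ioo (by exact WithTop.coe_le_coe.2 le_top)
  exact ((h2.differentiableOn one_ne_zero r hr).differentiableAt
    (isOpen_Ioo.mem_nhds hr)).hasDerivAt

theorem hasDerivAt_V {r : ℝ} (hr : r ∈ Ioo 0 R) :
    HasDerivAt (Vd R U) (deriv (deriv U) r) r := by
  apply (c.hasDerivAt_derivU hr).congr_of_eventuallyEq
  filter_upwards [isOpen_Ioo.eventually_mem hr] with x hx
  exact V_eq_deriv hx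

theorem Psi_cont : ContinuousOn (Psi N R ε g U) (Icc 0 R) :=
  continuousOn_const.mul (((continuous_pow _).continuousOn).mul
    ((c.hg.continuous.continuousOn).mul c.V_cont))

theorem hasDerivAt_Psi {r : ℝ} (hr : r ∈ Ioo 0 R) :
    HasDerivAt (Psi N R ε g U) (r ^ (N - 1) * Fd N R A B p q U r) r := by
  have hgr : 0 < g r := c.hgpos r (Ioo_subset_Icc_self hr)
  have hpow : HasDerivAt (fun x : ℝ => x ^ (N - 1)) (((N:ℝ) - 1) * r ^ (N - 2)) r := by
    have h := hasDerivAt_pow (N - 1) r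
    have hN2 := c.hN
    have e1 : ((N - 1 : ℕ) : ℝ) = (N:ℝ) - 1 := by
      have : (1:ℕ) ≤ N := by omega
      push_cast [Nat.cast_sub this]; ring
    have e2 : N - 1 - 1 = N - 2 := by omega
    rw [e1, e2] at h
    exact h
  have hgd : HasDerivAt g (deriv g r) r := (c.hg.differentiable (by simp) r).hasDerivAt
  have h1 : HasDerivAt (fun x => g x * Vd R U x)
      (deriv g r * Vd R U r + g r * deriv (deriv U) r) r := hgd.mul (c.hasDerivAt_V hr)
  have h2 := (hpow.mul h1).const_mul (ε ^ 2)
  have heqn := c.sol.eqn r hr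
  have hFd : Fd N R A B p q U r
      = ε ^ 2 * g r * (deriv (deriv U) r
        + (((N:ℝ) - 1) / r + deriv g r / g r) * Vd R U r) := by
    unfold Fd; rw [V_eq_deriv hr]; exact heqn.symm
  refine h2.congr_deriv ?_
  symm
  rw [hFd]
  have hN2 := c.hN
  have hrpow : r ^ (N - 1) = r * r ^ (N - 2) := by
    have : N - 1 = (N - 2) + 1 := by omega
    rw [this, pow_succ]; ring
  rw [hrpow]
  field_simp [hr.1.ne', hgr.ne']
  ring

theorem Psi_eq {r : ℝ} (hr : r ∈ Icc 0 R) :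
    Psi N R ε g U r = ∫ s in (0:ℝ)..r, s ^ (N - 1) * Fd N R A B p q U s := by
  have hN2 := c.hN
  have h0 : Psi N R ε g U 0 = 0 := by
    simp [Psi, zero_pow (show N - 1 ≠ 0 by omega)]
  have key : (∫ s in (0:ℝ)..r, s ^ (N - 1) * Fd N R A B p q U s)
      = Psi N R ε g U r - Psi N R ε g U 0 := by
    apply intervalIntegral.integral_eq_sub_of_hasDeriv_right_of_le hr.1
    · exact c.Psi_cont.mono (Icc_subset_Icc le_rfl hr.2)
    · intro x hx
      exact (c.hasDerivAt_Psi ⟨hx.1, lt_of_lt_of_le hx.2 hr.2⟩).hasDerivWithinAt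
    · apply ContinuousOn.intervalIntegrable
      rw [uIcc_of_le hr.1]
      exact ((continuous_pow _).continuousOn).mul
        (c.Fd_cont.mono (Icc_subset_Icc le_rfl hr.2))
  rw [key, h0, sub_zero]

theorem total : (∫ s in (0:ℝ)..R, s ^ (N - 1) * Fd N R A B p q U s)
    = R ^ N * (A - B) / N := by
  have h1 : ∀ s ∈ uIcc (0:ℝ) R, s ^ (N-1) * Fd N R A B p q U s
      = (R ^ N / (N:ℝ) * A / intExp N R p U) * (s ^ (N-1) * Real.exp (p * U s))
        - (R ^ N / (N:ℝ) * B / intExp N R (-q) U) * (s ^ (N-1) * Real.exp (-q * U s)) := by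
    intro s _; unfold Fd; ring
  rw [intervalIntegral.integral_congr h1]
  have hi1 : IntervalIntegrable (fun s => s ^ (N-1) * Real.exp (p * U s)) volume 0 R := by
    apply ContinuousOn.intervalIntegrable
    apply ((continuous_pow _).continuousOn.mul ((continuousOn_const.mul c.hUcont).rexp)).mono
    rw [uIcc_of_le c.hR.le]
  have hi2 : IntervalIntegrable (fun s => s ^ (N-1) * Real.exp (-q * U s)) volume 0 R := by
    apply ContinuousOn.intervalIntegrable
    apply ((continuous_pow _).continuousOn.mul ((continuousOn_const.mul c.hUcont).rexp)).mono
    rw [uIcc_of_le c.hR.le]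
  rw [intervalIntegral.integral_sub (hi1.const_mul _) (hi2.const_mul _),
    intervalIntegral.integral_const_mul, intervalIntegral.integral_const_mul]
  have e1 : (∫ s in (0:ℝ)..R, s ^ (N-1) * Real.exp (p * U s)) = intExp N R p U := rfl
  have e2 : (∫ s in (0:ℝ)..R, s ^ (N-1) * Real.exp (-q * U s)) = intExp N R (-q) U := rfl
  rw [e1, e2]
  have hip := (c.intExp_pos p).ne'
  have hiq := (c.intExp_pos (-q)).ne'
  rw [div_mul_cancel₀ _ hip, div_mul_cancel₀ _ hiq]
  ring

theorem PsiR_pos (hBA : B < A) : 0 < Psi N R ε g U R := by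
  rw [c.Psi_eq (right_mem_Icc.2 c.hR.le), c.total]
  have h1 : (0:ℝ) < R ^ N := pow_pos c.hR _
  have h2 := c.hNR
  have h3 : 0 < A - B := sub_pos.2 hBA
  positivity

theorem Psi_zero : Psi N R ε g U 0 = 0 := by
  have hN2 := c.hN
  simp [Psi, zero_pow (show N - 1 ≠ 0 by omega)]

theorem Psi_nonneg (hBA : B < A) : ∀ r ∈ Icc 0 R, 0 ≤ Psi N R ε g U r := by
  by_contra hcon
  push_neg at hcon
  obtain ⟨r0, hr0, hneg0⟩ := hcon
  obtain ⟨rs, hrs, hmin⟩ := isCompact_Icc.exists_isMinOn (nonempty_Icc.2 c.hR.le) c.Psi_cont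
  have hPneg : Psi N R ε g U rs < 0 := lt_of_le_of_lt (hmin hr0) hneg0
  have hrs0 : rs ≠ 0 := by
    intro h; rw [h, c.Psi_zero] at hPneg; exact lt_irrefl _ hPneg
  have hrsR : rs ≠ R := by
    intro h; rw [h] at hPneg; exact absurd hPneg (not_lt.2 (c.PsiR_pos hBA).le)
  have hrsIoo : rs ∈ Ioo 0 R := ⟨hrs.1.lt_of_ne (Ne.symm hrs0), hrs.2.lt_of_ne hrsR⟩
  have hloc : IsLocalMin (Psi N R ε g U) rs :=
    hmin.isLocalMin (Icc_mem_nhds hrsIoo.1 hrsIoo.2)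
  have hd0 : rs ^ (N - 1) * Fd N R A B p q U rs = 0 :=
    hloc.hasDerivAt_eq_zero (c.hasDerivAt_Psi hrsIoo)
  have hFrs : Fd N R A B p q U rs = 0 := by
    rcases mul_eq_zero.1 hd0 with h | h
    · exact absurd h (pow_ne_zero _ hrsIoo.1.ne')
    · exact h
  -- the last point before `rs` where `Psi` is nonnegative
  set S : Set ℝ := Icc 0 rs ∩ (Psi N R ε g U) ⁻¹' (Ici 0) with hSdef
  have hSne : S.Nonempty := ⟨0, left_mem_Icc.2 hrsIoo.1.le, by
    simp only [mem_preimage, mem_Ici, c.Psi_zero]; exact le_rfl⟩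
  have hSbdd : BddAbove S := ⟨rs, fun x hx => hx.1.2⟩
  have hSclosed : IsClosed S := by
    apply ContinuousOn.preimage_isClosed_of_isClosed
      (c.Psi_cont.mono (Icc_subset_Icc le_rfl hrs.2)) isClosed_Icc isClosed_Ici
  set a := sSup S with ha
  have haS : a ∈ S := hSclosed.csSup_mem hSne hSbdd
  have ha0 : 0 ≤ a := haS.1.1
  have hars : a ≤ rs := haS.1.2
  have haP : 0 ≤ Psi N R ε g U a := haS.2
  have hane : a ≠ rs := by
    intro h; rw [h] at haP; exact absurd hPneg (not_lt.2 haP)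
  have halt : a < rs := hars.lt_of_ne hane
  have hnegI : ∀ x ∈ Ioc a rs, Psi N R ε g U x < 0 := by
    intro x hx
    by_contra hge
    push_neg at hge
    have hxS : x ∈ S := ⟨⟨ha0.trans hx.1.le, hx.2⟩, hge⟩
    exact absurd (le_csSup hSbdd hxS) (not_le.2 hx.1)
  have hanti : StrictAntiOn U (Icc a rs) := by
    apply strictAntiOn_of_deriv_neg (convex_Icc a rs)
      (c.hUcont.mono (Icc_subset_Icc ha0 hrs.2))
    intro x hx
    rw [interior_Icc] at hx
    have hxIoo : x ∈ Ioo 0 R := ⟨ha0.trans_lt hx.1, hx.2.trans_le hrs.2⟩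
    rw [← V_eq_deriv hxIoo]
    have hPx : Psi N R ε g U x < 0 := hnegI x ⟨hx.1, hx.2.le⟩
    by_contra hge
    push_neg at hge
    have : 0 ≤ Psi N R ε g U x := by
      apply mul_nonneg (sq_nonneg ε)
      exact mul_nonneg (pow_nonneg hxIoo.1.le _)
        (mul_nonneg (c.hgpos x (Ioo_subset_Icc_self hxIoo)).le hge)
    linarith
  have hFpos : ∀ x ∈ Ioo a rs, 0 < x ^ (N - 1) * Fd N R A B p q U x := by
    intro x hx
    have hx0 : 0 < x := ha0.trans_lt hx.1
    have hU : U rs < U x := hanti ⟨hx.1.le, hx.2.le⟩ (right_mem_Icc.2 halt.le) hx.2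
    have := c.Fd_lt_Fd hU
    rw [hFrs] at this
    exact mul_pos (pow_pos hx0 _) this
  have hint : IntervalIntegrable (fun s => s ^ (N - 1) * Fd N R A B p q U s) volume a rs := by
    apply ContinuousOn.intervalIntegrable
    rw [uIcc_of_le halt.le]
    exact ((continuous_pow _).continuousOn).mul
      (c.Fd_cont.mono (Icc_subset_Icc ha0 hrs.2))
  have hpos : 0 < ∫ s in a..rs, s ^ (N - 1) * Fd N R A B p q U s :=
    intervalIntegral.intervalIntegral_pos_of_pos_on hint hFpos halt
  have hsub : (∫ s in a..rs, s ^ (N - 1) * Fd N R A B p q U s)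
      = Psi N R ε g U rs - Psi N R ε g U a := by
    rw [c.Psi_eq hrs, c.Psi_eq ⟨ha0, hars.trans hrs.2⟩]
    rw [← intervalIntegral.integral_interval_sub_left]
    · apply ContinuousOn.intervalIntegrable
      rw [uIcc_of_le hrs.1]
      exact ((continuous_pow _).continuousOn).mul
        (c.Fd_cont.mono (Icc_subset_Icc le_rfl hrs.2))
    · apply ContinuousOn.intervalIntegrable
      rw [uIcc_of_le ha0]
      exact ((continuous_pow _).continuousOn).mul
        (c.Fd_cont.mono (Icc_subset_Icc le_rfl (hars.trans hrs.2)))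
  rw [hsub] at hpos
  linarith

theorem V_nonneg (hBA : B < A) : ∀ r ∈ Ioo 0 R, 0 ≤ Vd R U r := by
  intro r hr
  have hP := c.Psi_nonneg hBA r (Ioo_subset_Icc_self hr)
  by_contra hlt
  push_neg at hlt
  have h1 : 0 < ε ^ 2 := pow_pos c.hε 2
  have h2 : 0 < r ^ (N - 1) := pow_pos hr.1 _
  have h3 : 0 < g r := c.hgpos r (Ioo_subset_Icc_self hr)
  have : Psi N R ε g U r < 0 := by
    unfold Psi
    apply mul_neg_of_pos_of_neg h1
    apply mul_neg_of_pos_of_neg h2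
    exact mul_neg_of_pos_of_neg h3 hlt
  linarith

theorem U_mono (hBA : B < A) : MonotoneOn U (Icc 0 R) := by
  apply monotoneOn_of_deriv_nonneg (convex_Icc 0 R) c.hUcont
  · intro x hx
    rw [interior_Icc] at hx
    exact ((c.hasDerivAt_U hx).differentiableAt).differentiableWithinAt
  · intro x hx
    rw [interior_Icc] at hx
    rw [← V_eq_deriv hx]
    exact c.V_nonneg hBA x hx

theorem Fd_mono (hBA : B < A) : MonotoneOn (Fd N R A B p q U) (Icc 0 R) :=
  fun x hx y hy hxy => c.Fd_le_Fd (c.U_mono hBA hx hy hxy)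

theorem Fd_nonneg_Ioc (hBA : B < A) : ∀ r ∈ Ioc 0 R, 0 ≤ Fd N R A B p q U r := by
  intro r hr
  by_contra hlt
  push_neg at hlt
  have hrIcc : r ∈ Icc 0 R := Ioc_subset_Icc_self hr
  have hP := c.Psi_nonneg hBA r hrIcc
  rw [c.Psi_eq hrIcc] at hP
  have hmono : ∀ s ∈ Icc 0 r, s ^ (N - 1) * Fd N R A B p q U s
      ≤ s ^ (N - 1) * Fd N R A B p q U r := by
    intro s hs
    apply mul_le_mul_of_nonneg_left ?_ (pow_nonneg hs.1 _)
    exact c.Fd_mono hBA ⟨hs.1, hs.2.trans hr.2⟩ hrIcc hs.2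
  have hint1 : IntervalIntegrable (fun s => s ^ (N - 1) * Fd N R A B p q U s) volume 0 r := by
    apply ContinuousOn.intervalIntegrable
    rw [uIcc_of_le hr.1.le]
    exact ((continuous_pow _).continuousOn).mul
      (c.Fd_cont.mono (Icc_subset_Icc le_rfl hr.2))
  have hint2 : IntervalIntegrable (fun s => s ^ (N - 1) * Fd N R A B p q U r) volume 0 r :=
    ((continuous_pow (N - 1)).mul continuous_const).intervalIntegrable 0 r
  have hle := intervalIntegral.integral_mono_on hr.1.le hint1 hint2 hmono
  have hval : (∫ s in (0:ℝ)..r, s ^ (N - 1) * Fd N R A B p q U r)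
      = r ^ N / N * Fd N R A B p q U r := by
    rw [intervalIntegral.integral_mul_const, integral_pow]
    have hN2 := c.hN
    have e : N - 1 + 1 = N := by omega
    have e2 : ((N - 1 : ℕ) : ℝ) + 1 = (N:ℝ) := by
      have h1 : (1:ℕ) ≤ N := by omega
      push_cast [Nat.cast_sub h1]; ring
    rw [e, e2, zero_pow (show N ≠ 0 by omega)]
    ring
  rw [hval] at hle
  have : r ^ N / N * Fd N R A B p q U r < 0 := by
    apply mul_neg_of_pos_of_neg ?_ hlt
    exact div_pos (pow_pos hr.1 _) c.hNR
  linarith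

theorem Fd_nonneg (hBA : B < A) : ∀ r ∈ Icc 0 R, 0 ≤ Fd N R A B p q U r := by
  intro r hr
  rcases eq_or_lt_of_le hr.1 with h0 | h0
  · subst h0
    have hmem : Ioc (0:ℝ) R ∈ 𝓝[>] (0:ℝ) := by
      rw [← nhdsWithin_Ioc_eq_nhdsGT c.hR]
      exact self_mem_nhdsWithin
    have ht : Tendsto (Fd N R A B p q U) (𝓝[>] (0:ℝ)) (𝓝 (Fd N R A B p q U 0)) := by
      have := (c.Fd_cont 0 (left_mem_Icc.2 c.hR.le)).mono_left
        (nhdsWithin_mono _ Ioc_subset_Icc_self)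
      rwa [nhdsWithin_Ioc_eq_nhdsGT c.hR] at this
    apply ge_of_tendsto ht
    filter_upwards [hmem] with x hx
    exact c.Fd_nonneg_Ioc hBA x hx
  · exact c.Fd_nonneg_Ioc hBA r ⟨h0, hr.2⟩

theorem FdInt {a b : ℝ} (ha : 0 ≤ a) (hb : b ≤ R) (hab : a ≤ b) :
    IntervalIntegrable (fun s => s ^ (N - 1) * Fd N R A B p q U s) volume a b := by
  apply ContinuousOn.intervalIntegrable
  rw [uIcc_of_le hab]
  exact ((continuous_pow _).continuousOn).mul (c.Fd_cont.mono (Icc_subset_Icc ha hb))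

theorem expInt (co : ℝ) {a b : ℝ} (ha : 0 ≤ a) (hb : b ≤ R) (hab : a ≤ b) :
    IntervalIntegrable (fun s => s ^ (N - 1) * Real.exp (co * U s)) volume a b := by
  apply ContinuousOn.intervalIntegrable
  rw [uIcc_of_le hab]
  exact ((continuous_pow _).continuousOn).mul
    ((continuousOn_const.mul (c.hUcont.mono (Icc_subset_Icc ha hb))).rexp)

theorem Psi_sub {a b : ℝ} (ha : 0 ≤ a) (hb : b ≤ R) (hab : a ≤ b) :
    Psi N R ε g U b - Psi N R ε g U a
      = ∫ s in a..b, s ^ (N - 1) * Fd N R A B p q U s := by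
  rw [c.Psi_eq ⟨ha.trans hab, hb⟩, c.Psi_eq ⟨ha, hab.trans hb⟩]
  exact intervalIntegral.integral_interval_sub_left
    (c.FdInt le_rfl hb (ha.trans hab)) (c.FdInt le_rfl (hab.trans hb) ha)

set_option maxHeartbeats 1000000 in
theorem interior_small (hBA : B < A) {δ η Gmax : ℝ} (hδ : 0 < δ) (hδR : δ < R) (hη : 0 < η)
    (hG : ∀ r ∈ Icc (0:ℝ) R, g r ≤ Gmax)
    (hcond : R ^ N * A / ((N:ℝ) * ((R - δ) ^ (N - 1) * (δ / 4)))
      * Real.exp (-(p * ((R - δ) ^ (N - 1) * (δ / 2) / (R ^ (N - 1) * Gmax)) * (δ / 4) * η) / ε ^ 2)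
      < η) :
    Fd N R A B p q U (R - δ) ≤ η := by
  by_contra hcon
  push_neg at hcon
  set m := Fd N R A B p q U (R - δ) with hm
  have hmη : η < m := hcon
  have hm0 : 0 < m := hη.trans hmη
  have hRδ : 0 < R - δ := sub_pos.2 hδR
  have hRmem : R ∈ Icc (0:ℝ) R := right_mem_Icc.2 c.hR.le
  have hGmax : 0 < Gmax := lt_of_lt_of_le (c.hgpos R hRmem) (hG R hRmem)
  have hε2 : (0:ℝ) < ε ^ 2 := pow_pos c.hε 2
  have hN0 : (0:ℝ) < N := c.hNR
  have hmem1 : R - δ ∈ Icc (0:ℝ) R := ⟨hRδ.le, by linarith⟩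
  have hmem2 : R - δ/2 ∈ Icc (0:ℝ) R := ⟨by linarith, by linarith⟩
  have hmem4 : R - δ/4 ∈ Icc (0:ℝ) R := ⟨by linarith, by linarith⟩
  set c1 : ℝ := (R - δ) ^ (N - 1) * (δ / 2) / (R ^ (N - 1) * Gmax) with hc1def
  have hpowRδ : (0:ℝ) < (R - δ) ^ (N - 1) := pow_pos hRδ _
  have hpowR : (0:ℝ) < R ^ (N - 1) := pow_pos c.hR _
  have hc1pos : 0 < c1 := by
    apply div_pos (by positivity) (by positivity)
  -- Step (i)+(ii): pointwise lower bound for V on [R - δ/2, R - δ/4]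
  have hVlow : ∀ r ∈ Icc (R - δ/2) (R - δ/4), m * c1 / ε ^ 2 ≤ Vd R U r := by
    intro r hrm
    have hr0 : 0 < r := by
      have := hrm.1; nlinarith
    have hrR : r < R := by
      have := hrm.2; linarith
    have hrIoo : r ∈ Ioo 0 R := ⟨hr0, hrR⟩
    have hrge : R - δ ≤ r := by have := hrm.1; linarith
    have hPsiLow : m * ((R - δ) ^ (N - 1) * (δ / 2)) ≤ Psi N R ε g U r := by
      have hsub := c.Psi_sub hRδ.le hrR.le hrge
      have hPnn := c.Psi_nonneg hBA (R - δ) hmem1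
      have hlow : (∫ _ in (R - δ)..r, m * (R - δ) ^ (N - 1))
          ≤ ∫ s in (R - δ)..r, s ^ (N - 1) * Fd N R A B p q U s := by
        apply intervalIntegral.integral_mono_on hrge intervalIntegrable_const
          (c.FdInt hRδ.le hrR.le hrge)
        intro s hs
        have hs0 : 0 < s := lt_of_lt_of_le hRδ hs.1
        have h1 : (R - δ) ^ (N - 1) ≤ s ^ (N - 1) := pow_le_pow_left₀ hRδ.le hs.1 _
        have h2 : m ≤ Fd N R A B p q U s :=
          c.Fd_mono hBA hmem1 ⟨hs0.le, hs.2.trans hrR.le⟩ hs.1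
        nlinarith
      rw [intervalIntegral.integral_const, smul_eq_mul] at hlow
      have hlen : δ/2 ≤ r - (R - δ) := by have := hrm.1; linarith
      have hstep : m * ((R - δ) ^ (N - 1) * (δ / 2))
          ≤ (r - (R - δ)) * (m * (R - δ) ^ (N - 1)) := by
        have := mul_le_mul_of_nonneg_left hlen (mul_nonneg hm0.le hpowRδ.le)
        nlinarith
      linarith
    have hVnn := c.V_nonneg hBA r hrIoo
    have hgr : g r ≤ Gmax := hG r (Ioo_subset_Icc_self hrIoo)
    have hgr0 : 0 < g r := c.hgpos r (Ioo_subset_Icc_self hrIoo)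
    have hrpow : r ^ (N - 1) ≤ R ^ (N - 1) := pow_le_pow_left₀ hr0.le hrR.le _
    have hup : Psi N R ε g U r ≤ ε ^ 2 * (R ^ (N - 1) * Gmax) * Vd R U r := by
      unfold Psi
      have hmm : r ^ (N - 1) * g r ≤ R ^ (N - 1) * Gmax :=
        mul_le_mul hrpow hgr hgr0.le hpowR.le
      have h1 := mul_le_mul_of_nonneg_right hmm hVnn
      have h2 := mul_le_mul_of_nonneg_left h1 hε2.le
      nlinarith
    have hD : (0:ℝ) < ε ^ 2 * (R ^ (N - 1) * Gmax) := by positivity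
    have heq : m * c1 / ε ^ 2
        = m * ((R - δ) ^ (N - 1) * (δ / 2)) / (ε ^ 2 * (R ^ (N - 1) * Gmax)) := by
      rw [hc1def]; field_simp
    rw [heq]
    exact (div_le_iff₀ hD).2 (by nlinarith)
  -- Step (iii): growth of U
  have hab : R - δ/2 ≤ R - δ/4 := by linarith
  have hiii : δ/4 * (m * c1 / ε ^ 2) ≤ U (R - δ/4) - U (R - δ/2) := by
    have hFTC : (∫ s in (R - δ/2)..(R - δ/4), Vd R U s) = U (R - δ/4) - U (R - δ/2) := by
      apply intervalIntegral.integral_eq_sub_of_hasDeriv_right_of_le hab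
      · exact c.hUcont.mono (Icc_subset_Icc hmem2.1 hmem4.2)
      · intro x hx
        have hxIoo : x ∈ Ioo 0 R :=
          ⟨lt_of_le_of_lt hmem2.1 hx.1, lt_of_lt_of_le hx.2 (by linarith)⟩
        exact (c.hasDerivAt_U hxIoo).hasDerivWithinAt
      · apply ContinuousOn.intervalIntegrable
        rw [uIcc_of_le hab]
        exact c.V_cont.mono (Icc_subset_Icc hmem2.1 hmem4.2)
    rw [← hFTC]
    have hlow : (∫ _ in (R - δ/2)..(R - δ/4), m * c1 / ε ^ 2)
        ≤ ∫ s in (R - δ/2)..(R - δ/4), Vd R U s := by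
      apply intervalIntegral.integral_mono_on hab intervalIntegrable_const ?_ hVlow
      apply ContinuousOn.intervalIntegrable
      rw [uIcc_of_le hab]
      exact c.V_cont.mono (Icc_subset_Icc hmem2.1 hmem4.2)
    rw [intervalIntegral.integral_const, smul_eq_mul] at hlow
    have he : R - δ/4 - (R - δ/2) = δ/4 := by ring
    rw [he] at hlow
    exact hlow
  -- Step (iv): lower bound on intExp
  have hIp : Real.exp (p * U (R - δ/4)) * ((R - δ) ^ (N - 1) * (δ / 4)) ≤ intExp N R p U := by
    have hsplit : intExp N R p U
        = (∫ s in (0:ℝ)..(R - δ/4), s ^ (N - 1) * Real.exp (p * U s))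
          + ∫ s in (R - δ/4)..R, s ^ (N - 1) * Real.exp (p * U s) :=
      (intervalIntegral.integral_add_adjacent_intervals
        (c.expInt p le_rfl hmem4.2 hmem4.1) (c.expInt p hmem4.1 le_rfl hmem4.2)).symm
    have h1 : (0:ℝ) ≤ ∫ s in (0:ℝ)..(R - δ/4), s ^ (N - 1) * Real.exp (p * U s) := by
      apply intervalIntegral.integral_nonneg hmem4.1
      intro u hu
      exact mul_nonneg (pow_nonneg hu.1 _) (Real.exp_pos _).le
    have h2 : (∫ _ in (R - δ/4)..R, Real.exp (p * U (R - δ/4)) * (R - δ) ^ (N - 1))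
        ≤ ∫ s in (R - δ/4)..R, s ^ (N - 1) * Real.exp (p * U s) := by
      apply intervalIntegral.integral_mono_on hmem4.2 intervalIntegrable_const
        (c.expInt p hmem4.1 le_rfl hmem4.2)
      intro s hs
      have hs0 : 0 < s := lt_of_lt_of_le (by linarith : (0:ℝ) < R - δ/4) hs.1
      have hpow : (R - δ) ^ (N - 1) ≤ s ^ (N - 1) :=
        pow_le_pow_left₀ hRδ.le (by linarith [hs.1]) _
      have hU : U (R - δ/4) ≤ U s := c.U_mono hBA hmem4 ⟨hs0.le, hs.2⟩ hs.1
      have hexp : Real.exp (p * U (R - δ/4)) ≤ Real.exp (p * U s) :=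
        Real.exp_le_exp.2 (mul_le_mul_of_nonneg_left hU c.hp.le)
      nlinarith [Real.exp_pos (p * U (R - δ/4)), (Real.exp_pos (p * U s)).le]
    rw [intervalIntegral.integral_const, smul_eq_mul] at h2
    have he : R - (R - δ/4) = δ/4 := by ring
    rw [he] at h2
    have : Real.exp (p * U (R - δ/4)) * ((R - δ) ^ (N - 1) * (δ/4))
        = δ/4 * (Real.exp (p * U (R - δ/4)) * (R - δ) ^ (N - 1)) := by ring
    rw [this, hsplit]
    linarith
  -- Step (v): final bound
  have hIppos := c.intExp_pos p
  have hBpart : 0 ≤ B * Real.exp (-q * U (R - δ)) / intExp N R (-q) U :=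
    div_nonneg (mul_nonneg c.hB.le (Real.exp_pos _).le) (c.intExp_pos (-q)).le
  have hRN : (0:ℝ) < R ^ N / N := div_pos (pow_pos c.hR _) hN0
  have hv1 : m ≤ R ^ N / (N:ℝ) * (A * Real.exp (p * U (R - δ)) / intExp N R p U) := by
    rw [hm]
    unfold Fd
    nlinarith
  have hEpos : (0:ℝ) < Real.exp (p * U (R - δ/4)) * ((R - δ) ^ (N - 1) * (δ/4)) := by
    positivity
  have hexp1 : Real.exp (p * U (R - δ)) / intExp N R p U
      ≤ Real.exp (p * U (R - δ)) / (Real.exp (p * U (R - δ/4)) * ((R - δ) ^ (N - 1) * (δ/4))) :=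
    div_le_div_of_nonneg_left (Real.exp_pos _).le hEpos hIp
  have hexp2 : Real.exp (p * U (R - δ)) / (Real.exp (p * U (R - δ/4)) * ((R - δ) ^ (N - 1) * (δ/4)))
      = Real.exp (p * U (R - δ) - p * U (R - δ/4)) / ((R - δ) ^ (N - 1) * (δ/4)) := by
    rw [Real.exp_sub]
    field_simp
  have hUle : U (R - δ) ≤ U (R - δ/2) := c.U_mono hBA hmem1 hmem2 (by linarith)
  have hexp3 : p * U (R - δ) - p * U (R - δ/4) ≤ -(p * c1 * (δ/4) * m) / ε ^ 2 := by
    have hdiv : -(p * c1 * (δ/4) * m) / ε ^ 2 = p * (-(δ/4 * (m * c1 / ε ^ 2))) := by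
      field_simp
    rw [hdiv]
    nlinarith [c.hp, hiii]
  have hexp4 : Real.exp (p * U (R - δ) - p * U (R - δ/4))
      ≤ Real.exp (-(p * c1 * (δ/4) * m) / ε ^ 2) := Real.exp_le_exp.2 hexp3
  have hchain : m ≤ R ^ N * A / ((N:ℝ) * ((R - δ) ^ (N - 1) * (δ/4)))
      * Real.exp (-(p * c1 * (δ/4) * m) / ε ^ 2) := by
    have hpos4 : (0:ℝ) < (R - δ) ^ (N - 1) * (δ/4) := by positivity
    calc m ≤ R ^ N / (N:ℝ) * (A * Real.exp (p * U (R - δ)) / intExp N R p U) := hv1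
      _ ≤ R ^ N / (N:ℝ) * (A * (Real.exp (p * U (R - δ) - p * U (R - δ/4))
            / ((R - δ) ^ (N - 1) * (δ/4)))) := by
          have := hexp1.trans_eq hexp2
          have hA := c.hA
          apply mul_le_mul_of_nonneg_left ?_ hRN.le
          rw [mul_div_assoc]
          exact mul_le_mul_of_nonneg_left this hA.le
      _ ≤ R ^ N / (N:ℝ) * (A * (Real.exp (-(p * c1 * (δ/4) * m) / ε ^ 2)
            / ((R - δ) ^ (N - 1) * (δ/4)))) := by
          apply mul_le_mul_of_nonneg_left ?_ hRN.le
          apply mul_le_mul_of_nonneg_left ?_ c.hA.le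
          exact div_le_div_of_nonneg_right hexp4 hpos4.le
      _ = R ^ N * A / ((N:ℝ) * ((R - δ) ^ (N - 1) * (δ/4)))
            * Real.exp (-(p * c1 * (δ/4) * m) / ε ^ 2) := by
          field_simp
  -- exponential monotone in m
  have hexp5 : Real.exp (-(p * c1 * (δ/4) * m) / ε ^ 2)
      ≤ Real.exp (-(p * c1 * (δ/4) * η) / ε ^ 2) := by
    apply Real.exp_le_exp.2
    apply div_le_div_of_nonneg_right ?_ hε2.le
    have hfac : (0:ℝ) ≤ p * c1 * (δ/4) := by
      have := c.hp
      positivity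
    have := mul_le_mul_of_nonneg_left hmη.le hfac
    linarith
  have hfinal : m ≤ R ^ N * A / ((N:ℝ) * ((R - δ) ^ (N - 1) * (δ/4)))
      * Real.exp (-(p * c1 * (δ/4) * η) / ε ^ 2) := by
    apply hchain.trans
    apply mul_le_mul_of_nonneg_left hexp5
    exact (div_pos (mul_pos (pow_pos c.hR _) c.hA)
      (mul_pos hN0 (mul_pos hpowRδ (by linarith)))).le
  linarith [hcond, hfinal]

end Ctx

theorem aux_frac {x c : ℝ} (hx : 0 < x) (hc : 0 ≤ c) : x / (2 * (c + 1)) * c < x / 2 := by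
  have h1 : (0:ℝ) < 2 * (c + 1) := by linarith
  rw [div_mul_eq_mul_div, div_lt_div_iff₀ h1 (by norm_num : (0:ℝ) < 2)]
  nlinarith

set_option maxHeartbeats 1600000 in
theorem keyBA {N : ℕ} (hN : 2 ≤ N) {R A B p q : ℝ} (hR : 0 < R)
    (hA : 0 < A) (hB : 0 < B) (hp : 0 < p) (hq : 0 < q) (hBA : B < A)
    (g : ℝ → ℝ) (hg : ContDiff ℝ (⊤ : ℕ∞) g) (hgpos : ∀ r ∈ Icc (0:ℝ) R, 0 < g r)
    (U : ℝ → ℝ → ℝ) (hU : ∀ ε > 0, IsSolNStar N R A B p q g ε (U ε))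
    (h : ℝ → ℝ) (hh : ContinuousOn h (Icc 0 R)) :
    Tendsto (fun ε => ∫ r in (0:ℝ)..R, h r * Fd N R A B p q (U ε) r)
      (𝓝[>] 0) (𝓝 (R * (A - B) / (N : ℝ) * h R)) := by
  have hN0 : (0:ℝ) < N := by
    have : (2:ℝ) ≤ N := by exact_mod_cast hN
    linarith
  have hpowR : (0:ℝ) < R ^ (N - 1) := pow_pos hR _
  obtain ⟨Mh, hMhn⟩ := isCompact_Icc.exists_bound_of_continuousOn hh
  have hMh : ∀ r ∈ Icc (0:ℝ) R, |h r| ≤ Mh := by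
    intro r hr; have := hMhn r hr; rwa [Real.norm_eq_abs] at this
  have hMh0 : 0 ≤ Mh := le_trans (abs_nonneg _) (hMh R (right_mem_Icc.2 hR.le))
  obtain ⟨Gm, hGmn⟩ := isCompact_Icc.exists_bound_of_continuousOn
    (hg.continuous.continuousOn (s := Icc (0:ℝ) R))
  have hG : ∀ r ∈ Icc (0:ℝ) R, g r ≤ Gm := by
    intro r hr
    have := hGmn r hr; rw [Real.norm_eq_abs] at this
    exact (le_abs_self _).trans this
  have hGm0 : 0 < Gm := lt_of_lt_of_le (hgpos R (right_mem_Icc.2 hR.le))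
    (hG R (right_mem_Icc.2 hR.le))
  set K : ℝ := R ^ N * (A - B) / N with hKdef
  have hKpos : 0 < K := div_pos (mul_pos (pow_pos hR _) (sub_pos.2 hBA)) hN0
  set wR : ℝ := h R / R ^ (N - 1) with hwRdef
  have hT : R * (A - B) / (N:ℝ) * h R = wR * K := by
    rw [hwRdef, hKdef]
    have hRN : R ^ N = R ^ (N - 1) * R := by
      rw [← pow_succ]; congr 1; omega
    rw [hRN]; field_simp
  rw [Metric.tendsto_nhds]
  intro η' hη'
  set η₂ : ℝ := η' / (2 * (K + 1)) with hη₂def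
  have hη₂ : 0 < η₂ := div_pos hη' (by linarith)
  -- choice of δ from continuity of h s / s^(N-1) at R
  have hwct : ContinuousWithinAt (fun s => h s / s ^ (N - 1)) (Icc (R/2) R) R := by
    apply ContinuousWithinAt.div
    · exact (hh.mono (Icc_subset_Icc (by linarith) le_rfl)) R (right_mem_Icc.2 (by linarith))
    · exact (continuous_pow _).continuousWithinAt
    · exact hpowR.ne'
  have hev : {s : ℝ | |h s / s ^ (N - 1) - wR| < η₂} ∈ 𝓝[Icc (R/2) R] R := by
    have h2 := Metric.tendsto_nhds.1 hwct η₂ hη₂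
    filter_upwards [h2] with s hs
    rw [Real.dist_eq] at hs
    exact hs
  obtain ⟨d, hd, hdsub⟩ := Metric.mem_nhdsWithin_iff.1 hev
  set δ : ℝ := min (d/2) (R/4) with hδdef
  have hδ : 0 < δ := lt_min (by linarith) (by linarith)
  have hδR4 : δ ≤ R/4 := min_le_right _ _
  have hδR : δ < R := lt_of_le_of_lt hδR4 (by linarith)
  have hRδ : 0 < R - δ := by linarith
  have hwb : ∀ s ∈ Icc (R - δ) R, |h s / s ^ (N - 1) - wR| ≤ η₂ := by
    intro s hs
    apply le_of_lt
    apply hdsub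
    constructor
    · rw [Metric.mem_ball, Real.dist_eq]
      have h1 : |s - R| ≤ δ := by
        rw [abs_le]; constructor
        · linarith [hs.1]
        · linarith [hs.2]
      have hδd : δ < d := lt_of_le_of_lt (min_le_left _ _) (by linarith)
      linarith
    · exact ⟨by linarith [hs.1], hs.2⟩
  set CC : ℝ := Mh * R + |wR| * R ^ N / N with hCCdef
  have hCC0 : 0 ≤ CC := add_nonneg (mul_nonneg hMh0 hR.le)
    (div_nonneg (mul_nonneg (abs_nonneg _) (pow_pos hR _).le) hN0.le)
  set η₃ : ℝ := η' / (2 * (CC + 1)) with hη₃def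
  have hη₃ : 0 < η₃ := div_pos hη' (by linarith)
  -- eventual smallness of the interior bound
  have hc2pos : (0:ℝ) < (R - δ) ^ (N - 1) * (δ / 4) := by positivity
  have hc1pos : (0:ℝ) < (R - δ) ^ (N - 1) * (δ / 2) / (R ^ (N - 1) * Gm) := by positivity
  have hC3pos : (0:ℝ) < R ^ N * A / ((N:ℝ) * ((R - δ) ^ (N - 1) * (δ / 4))) :=
    div_pos (mul_pos (pow_pos hR _) hA) (mul_pos hN0 hc2pos)
  have hC5pos : (0:ℝ) < p * ((R - δ) ^ (N - 1) * (δ / 2) / (R ^ (N - 1) * Gm)) * (δ / 4) * η₃ := by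
    have := hp
    positivity
  have htend : Tendsto (fun e : ℝ => R ^ N * A / ((N:ℝ) * ((R - δ) ^ (N - 1) * (δ / 4)))
      * Real.exp (-(p * ((R - δ) ^ (N - 1) * (δ / 2) / (R ^ (N - 1) * Gm)) * (δ / 4) * η₃) / e ^ 2))
      (𝓝[>] (0:ℝ)) (𝓝 0) := by
    set C3 : ℝ := R ^ N * A / ((N:ℝ) * ((R - δ) ^ (N - 1) * (δ / 4)))
    set C5 : ℝ := p * ((R - δ) ^ (N - 1) * (δ / 2) / (R ^ (N - 1) * Gm)) * (δ / 4) * η₃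
    have h1 : Tendsto (fun e : ℝ => C5 * (e⁻¹ * e⁻¹)) (𝓝[>] (0:ℝ)) atTop :=
      Tendsto.const_mul_atTop hC5pos
        (tendsto_inv_nhdsGT_zero.atTop_mul_atTop₀ tendsto_inv_nhdsGT_zero)
    have h2 : Tendsto (fun e : ℝ => Real.exp (-(C5 * (e⁻¹ * e⁻¹)))) (𝓝[>] (0:ℝ)) (𝓝 0) :=
      Real.tendsto_exp_atBot.comp (tendsto_neg_atTop_atBot.comp h1)
    have h3 : (fun e : ℝ => C3 * Real.exp (-C5 / e ^ 2))
        = fun e : ℝ => C3 * Real.exp (-(C5 * (e⁻¹ * e⁻¹))) := by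
      funext e
      congr 1
      rw [div_eq_mul_inv]
      congr 1
      rw [sq]
      ring
    rw [h3]
    simpa using h2.const_mul C3
  have hevcond := htend.eventually_lt_const hη₃
  filter_upwards [hevcond, self_mem_nhdsWithin] with ε hcond hεpos
  rw [Real.dist_eq, hT]
  -- fixed ε from now on
  have hc : Ctx N R A B p q g ε (U ε) :=
    ⟨hN, hR, hA, hB, hp, hq, hg, hgpos, hεpos, hU ε hεpos⟩
  have hFδ : Fd N R A B p q (U ε) (R - δ) ≤ η₃ :=
    hc.interior_small hBA hδ hδR hη₃ hG hcond
  have hmem1 : R - δ ∈ Icc (0:ℝ) R := ⟨by linarith, by linarith⟩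
  have hFδnn : 0 ≤ Fd N R A B p q (U ε) (R - δ) := hc.Fd_nonneg hBA _ hmem1
  have hPsiR : Psi N R ε g (U ε) R = K := by
    rw [hc.Psi_eq (right_mem_Icc.2 hR.le), hKdef]
    exact hc.total
  -- split of the integral
  have hint1 : IntervalIntegrable (fun s => h s * Fd N R A B p q (U ε) s) volume 0 (R - δ) := by
    apply ContinuousOn.intervalIntegrable
    rw [uIcc_of_le hmem1.1]
    exact (hh.mono (Icc_subset_Icc le_rfl hmem1.2)).mul
      (hc.Fd_cont.mono (Icc_subset_Icc le_rfl hmem1.2))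
  have hint2 : IntervalIntegrable (fun s => h s * Fd N R A B p q (U ε) s) volume (R - δ) R := by
    apply ContinuousOn.intervalIntegrable
    rw [uIcc_of_le (by linarith)]
    exact (hh.mono (Icc_subset_Icc hmem1.1 le_rfl)).mul
      (hc.Fd_cont.mono (Icc_subset_Icc hmem1.1 le_rfl))
  have hsplit : (∫ r in (0:ℝ)..R, h r * Fd N R A B p q (U ε) r)
      = (∫ r in (0:ℝ)..(R - δ), h r * Fd N R A B p q (U ε) r)
        + ∫ r in (R - δ)..R, h r * Fd N R A B p q (U ε) r :=
    (intervalIntegral.integral_add_adjacent_intervals hint1 hint2).symm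
  -- first piece
  have hE1 : |∫ r in (0:ℝ)..(R - δ), h r * Fd N R A B p q (U ε) r| ≤ Mh * η₃ * R := by
    have hb : ∀ x ∈ Set.uIoc (0:ℝ) (R - δ), ‖h x * Fd N R A B p q (U ε) x‖ ≤ Mh * η₃ := by
      intro x hx
      rw [uIoc_of_le hmem1.1] at hx
      have hxI : x ∈ Icc (0:ℝ) R := ⟨hx.1.le, hx.2.trans (by linarith)⟩
      have h1 : |h x| ≤ Mh := hMh x hxI
      have h2 : 0 ≤ Fd N R A B p q (U ε) x := hc.Fd_nonneg hBA x hxI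
      have h3 : Fd N R A B p q (U ε) x ≤ Fd N R A B p q (U ε) (R - δ) :=
        hc.Fd_mono hBA hxI hmem1 hx.2
      rw [Real.norm_eq_abs, abs_mul, abs_of_nonneg h2]
      exact mul_le_mul h1 (h3.trans hFδ) h2 hMh0
    have hnb := intervalIntegral.norm_integral_le_of_norm_le_const hb
    rw [Real.norm_eq_abs] at hnb
    have habs : |R - δ - 0| = R - δ := by rw [sub_zero, abs_of_pos hRδ]
    rw [habs] at hnb
    have : Mh * η₃ * (R - δ) ≤ Mh * η₃ * R :=
      mul_le_mul_of_nonneg_left (by linarith : R - δ ≤ R) (mul_nonneg hMh0 hη₃.le)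
    linarith
  -- identities on [R - δ, R]
  have hJeq : (∫ s in (R - δ)..R, s ^ (N - 1) * Fd N R A B p q (U ε) s)
      = K - Psi N R ε g (U ε) (R - δ) := by
    have hps := hc.Psi_sub hmem1.1 le_rfl (by linarith : R - δ ≤ R)
    rw [hPsiR] at hps
    linarith
  have hPsiδnn : 0 ≤ Psi N R ε g (U ε) (R - δ) := hc.Psi_nonneg hBA _ hmem1
  have hJnn : 0 ≤ ∫ s in (R - δ)..R, s ^ (N - 1) * Fd N R A B p q (U ε) s := by
    apply intervalIntegral.integral_nonneg (by linarith : R - δ ≤ R)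
    intro u hu
    exact mul_nonneg (pow_nonneg (by linarith [hu.1] : (0:ℝ) ≤ u) _)
      (hc.Fd_nonneg hBA u ⟨by linarith [hu.1], hu.2⟩)
  have hPsiδub : Psi N R ε g (U ε) (R - δ) ≤ Fd N R A B p q (U ε) (R - δ) * R ^ N / N := by
    rw [hc.Psi_eq hmem1]
    have hptw : ∀ s ∈ Icc (0:ℝ) (R - δ), s ^ (N - 1) * Fd N R A B p q (U ε) s
        ≤ s ^ (N - 1) * Fd N R A B p q (U ε) (R - δ) := by
      intro s hs
      exact mul_le_mul_of_nonneg_left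
        (hc.Fd_mono hBA ⟨hs.1, hs.2.trans hmem1.2⟩ hmem1 hs.2) (pow_nonneg hs.1 _)
    have hmono := intervalIntegral.integral_mono_on hmem1.1
      (hc.FdInt le_rfl hmem1.2 hmem1.1)
      (((continuous_pow (N - 1)).mul continuous_const).intervalIntegrable _ _) hptw
    have hval : (∫ s in (0:ℝ)..(R - δ), s ^ (N - 1) * Fd N R A B p q (U ε) (R - δ))
        = (R - δ) ^ N / N * Fd N R A B p q (U ε) (R - δ) := by
      rw [intervalIntegral.integral_mul_const, integral_pow]
      have e : N - 1 + 1 = N := by omega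
      have e2 : ((N - 1 : ℕ) : ℝ) + 1 = (N:ℝ) := by
        have h1 : (1:ℕ) ≤ N := by omega
        push_cast [Nat.cast_sub h1]; ring
      rw [e, e2, zero_pow (show N ≠ 0 by omega)]
      ring
    change _ ≤ ∫ s in (0:ℝ)..(R - δ), s ^ (N - 1) * Fd N R A B p q (U ε) (R - δ) at hmono
    rw [hval] at hmono
    have hple : (R - δ) ^ N ≤ R ^ N := pow_le_pow_left₀ hRδ.le (by linarith) _
    have : (R - δ) ^ N / N * Fd N R A B p q (U ε) (R - δ)
        ≤ Fd N R A B p q (U ε) (R - δ) * R ^ N / N := by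
      have h1 := mul_le_mul_of_nonneg_left hple hFδnn
      have h2 := div_le_div_of_nonneg_right h1 hN0.le
      calc (R - δ) ^ N / N * Fd N R A B p q (U ε) (R - δ)
          = Fd N R A B p q (U ε) (R - δ) * (R - δ) ^ N / N := by ring
        _ ≤ Fd N R A B p q (U ε) (R - δ) * R ^ N / N := h2
    linarith
  -- rewrite the boundary integral
  have hcongr : (∫ r in (R - δ)..R, h r * Fd N R A B p q (U ε) r)
      = ∫ r in (R - δ)..R, ((h r / r ^ (N - 1) - wR) * (r ^ (N - 1) * Fd N R A B p q (U ε) r)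
          + wR * (r ^ (N - 1) * Fd N R A B p q (U ε) r)) := by
    apply intervalIntegral.integral_congr
    intro s hs
    rw [uIcc_of_le (by linarith : R - δ ≤ R)] at hs
    have hs0 : 0 < s := lt_of_lt_of_le hRδ hs.1
    have hsp : s ^ (N - 1) ≠ 0 := (pow_pos hs0 _).ne'
    field_simp
    ring
  have hFdIntδ := hc.FdInt hmem1.1 le_rfl (by linarith : R - δ ≤ R)
  have hintA : IntervalIntegrable
      (fun r => (h r / r ^ (N - 1) - wR) * (r ^ (N - 1) * Fd N R A B p q (U ε) r))
      volume (R - δ) R := by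
    apply ContinuousOn.intervalIntegrable
    rw [uIcc_of_le (by linarith : R - δ ≤ R)]
    apply ContinuousOn.mul
    · apply ContinuousOn.sub ?_ continuousOn_const
      apply ContinuousOn.div (hh.mono (Icc_subset_Icc hmem1.1 le_rfl))
        (continuous_pow _).continuousOn
      intro x hx
      exact (pow_pos (lt_of_lt_of_le hRδ hx.1) _).ne'
    · exact ((continuous_pow _).continuousOn).mul
        (hc.Fd_cont.mono (Icc_subset_Icc hmem1.1 le_rfl))
  have hintB : IntervalIntegrable
      (fun r => wR * (r ^ (N - 1) * Fd N R A B p q (U ε) r)) volume (R - δ) R :=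
    hFdIntδ.const_mul wR
  have hsplit2 : (∫ r in (R - δ)..R, ((h r / r ^ (N - 1) - wR) * (r ^ (N - 1) * Fd N R A B p q (U ε) r)
          + wR * (r ^ (N - 1) * Fd N R A B p q (U ε) r)))
      = (∫ r in (R - δ)..R, (h r / r ^ (N - 1) - wR) * (r ^ (N - 1) * Fd N R A B p q (U ε) r))
        + ∫ r in (R - δ)..R, wR * (r ^ (N - 1) * Fd N R A B p q (U ε) r) :=
    intervalIntegral.integral_add hintA hintB
  have hBval : (∫ r in (R - δ)..R, wR * (r ^ (N - 1) * Fd N R A B p q (U ε) r))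
      = wR * (K - Psi N R ε g (U ε) (R - δ)) := by
    rw [intervalIntegral.integral_const_mul, hJeq]
  have hE2 : |∫ r in (R - δ)..R, (h r / r ^ (N - 1) - wR) * (r ^ (N - 1) * Fd N R A B p q (U ε) r)|
      ≤ η₂ * K := by
    have hgint : IntervalIntegrable (fun s => η₂ * (s ^ (N - 1) * Fd N R A B p q (U ε) s))
        volume (R - δ) R := hFdIntδ.const_mul η₂
    have hb : ∀ t ∈ Set.uIoc (R - δ) R, ‖(h t / t ^ (N - 1) - wR) * (t ^ (N - 1) * Fd N R A B p q (U ε) t)‖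
        ≤ η₂ * (t ^ (N - 1) * Fd N R A B p q (U ε) t) := by
      intro t ht
      rw [uIoc_of_le (by linarith : R - δ ≤ R)] at ht
      have ht0 : 0 < t := lt_of_lt_of_le hRδ ht.1.le
      have htI : t ∈ Icc (0:ℝ) R := ⟨ht0.le, ht.2⟩
      have h2 : 0 ≤ t ^ (N - 1) * Fd N R A B p q (U ε) t :=
        mul_nonneg (pow_pos ht0 _).le (hc.Fd_nonneg hBA t htI)
      rw [Real.norm_eq_abs, abs_mul, abs_of_nonneg h2]
      exact mul_le_mul_of_nonneg_right (hwb t ⟨ht.1.le, ht.2⟩) h2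
    have hnb := intervalIntegral.norm_integral_le_of_norm_le (by linarith : R - δ ≤ R)
      (Filter.Eventually.of_forall fun t ht => hb t
        (by rw [uIoc_of_le (by linarith : R - δ ≤ R)]; exact ht)) hgint
    rw [Real.norm_eq_abs] at hnb
    have hJ : (∫ s in (R - δ)..R, η₂ * (s ^ (N - 1) * Fd N R A B p q (U ε) s))
        = η₂ * (K - Psi N R ε g (U ε) (R - δ)) := by
      rw [intervalIntegral.integral_const_mul, hJeq]
    rw [hJ] at hnb
    have hKP : 0 ≤ K - Psi N R ε g (U ε) (R - δ) := by
      rw [← hJeq]; exact hJnn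
    have habs2 : |η₂ * (K - Psi N R ε g (U ε) (R - δ))|
        = η₂ * (K - Psi N R ε g (U ε) (R - δ)) :=
      abs_of_nonneg (mul_nonneg hη₂.le hKP)
    have : η₂ * (K - Psi N R ε g (U ε) (R - δ)) ≤ η₂ * K :=
      mul_le_mul_of_nonneg_left (by linarith) hη₂.le
    linarith
  -- assemble
  rw [hsplit, hcongr, hsplit2, hBval]
  have hw3 : |wR * Psi N R ε g (U ε) (R - δ)| ≤ |wR| * (η₃ * R ^ N / N) := by
    rw [abs_mul, abs_of_nonneg hPsiδnn]
    apply mul_le_mul_of_nonneg_left ?_ (abs_nonneg _)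
    apply hPsiδub.trans
    have hpn : (0:ℝ) ≤ R ^ N := (pow_pos hR _).le
    rw [div_le_div_iff₀ hN0 hN0]
    have := mul_le_mul_of_nonneg_right (mul_le_mul_of_nonneg_right hFδ hpn) hN0.le
    linarith
  have efinal : (∫ r in (0:ℝ)..(R - δ), h r * Fd N R A B p q (U ε) r)
      + ((∫ r in (R - δ)..R, (h r / r ^ (N - 1) - wR) * (r ^ (N - 1) * Fd N R A B p q (U ε) r))
        + wR * (K - Psi N R ε g (U ε) (R - δ))) - wR * K
      = (∫ r in (0:ℝ)..(R - δ), h r * Fd N R A B p q (U ε) r)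
        + (∫ r in (R - δ)..R, (h r / r ^ (N - 1) - wR) * (r ^ (N - 1) * Fd N R A B p q (U ε) r))
        + -(wR * Psi N R ε g (U ε) (R - δ)) := by ring
  rw [efinal]
  set X := (∫ r in (0:ℝ)..(R - δ), h r * Fd N R A B p q (U ε) r) with hXd
  set Y := (∫ r in (R - δ)..R, (h r / r ^ (N - 1) - wR) * (r ^ (N - 1) * Fd N R A B p q (U ε) r)) with hYd
  set W := wR * Psi N R ε g (U ε) (R - δ) with hWd
  have habsle : |X + Y + -W| ≤ |X| + |Y| + |W| := by
    calc |X + Y + -W| ≤ |X + Y| + |-W| := abs_add_le _ _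
      _ ≤ |X| + |Y| + |W| := by
          rw [abs_neg]
          exact add_le_add (abs_add_le _ _) le_rfl
  have hfin1 : Mh * η₃ * R + |wR| * (η₃ * R ^ N / N) = η₃ * CC := by
    rw [hCCdef]; ring
  have hfin2 : η₃ * CC < η' / 2 := by
    rw [hη₃def]
    exact aux_frac hη' hCC0
  have hfin3 : η₂ * K < η' / 2 := by
    rw [hη₂def]
    exact aux_frac hη' hKpos.le
  linarith [habsle, hE1, hE2, hw3]


theorem intExp_neg (N : ℕ) (R co : ℝ) (U : ℝ → ℝ) :
    intExp N R co (fun s => -U s) = intExp N R (-co) U := by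
  unfold intExp
  apply intervalIntegral.integral_congr
  intro s _
  have e : co * -U s = -co * U s := by ring
  simp only []
  rw [e]

theorem IsSolNStar.neg {N : ℕ} {R A B p q ε : ℝ} {g U : ℝ → ℝ}
    (hs : IsSolNStar N R A B p q g ε U) :
    IsSolNStar N R B A q p g ε (fun r => -U r) := by
  have hd1 : deriv (fun x => -U x) = fun x => -deriv U x := funext fun x => deriv.neg
  constructor
  · exact hs.contDiffOn_one.neg
  · exact hs.contDiffOn_top.neg
  · intro r hr
    have he := hs.eqn r hr
    rw [hd1]
    rw [show deriv (fun x => -deriv U x) r = -deriv (deriv U) r from deriv.neg]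
    rw [intExp_neg, intExp_neg]
    simp only [mul_neg, neg_mul, neg_neg]
    simp only [mul_neg, neg_mul, neg_neg] at he
    linear_combination -he
  · show (∫ s in (0:ℝ)..R, s ^ (N - 1) * -U s) = 0
    have e : (fun s : ℝ => s ^ (N - 1) * -U s) = fun s : ℝ => -(s ^ (N - 1) * U s) := by
      funext s; ring
    rw [e, intervalIntegral.integral_neg, hs.avg, neg_zero]
  · rw [hd1]
    show -deriv U 0 = 0
    rw [hs.bc0, neg_zero]
  · rw [hd1]
    show -deriv U R = R * (B - A) / (ε ^ 2 * (N:ℝ) * g R)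
    rw [hs.bcR]
    ring

/-- The net charge density `ρ_ε` converges weakly to the Dirac measure
`(R(B−A)/N) δ_R` concentrated at the boundary point `r = R`. -/
theorem stmt10 {N : ℕ} (hN : 2 ≤ N) {R A B p q : ℝ} (hR : 0 < R)
    (hA : 0 < A) (hB : 0 < B) (hp : 0 < p) (hq : 0 < q) (hAB : A ≠ B)
    (g : ℝ → ℝ) (hg : ContDiff ℝ (⊤ : ℕ∞) g) (hgpos : ∀ r ∈ Icc (0:ℝ) R, 0 < g r)
    (U : ℝ → ℝ → ℝ) (hU : ∀ ε > 0, IsSolNStar N R A B p q g ε (U ε)) :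
    ∀ h : ℝ → ℝ, ContinuousOn h (Icc 0 R) →
      Tendsto (fun ε => ∫ r in (0:ℝ)..R, h r * rho N R A B p q (U ε) r)
        (𝓝[>] 0) (𝓝 (R * (B - A) / (N : ℝ) * h R)) := by
  intro h hh
  have hrhoFd : ∀ (W : ℝ → ℝ) (r : ℝ), rho N R A B p q W r = -(Fd N R A B p q W r) := by
    intro W r; unfold rho Fd; ring
  rcases hAB.lt_or_gt with hAB' | hAB'
  · -- A < B : use the negated solutions
    have hU' : ∀ ε > 0, IsSolNStar N R B A q p g ε (fun r => -(U ε r)) :=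
      fun ε hε => (hU ε hε).neg
    have hkey := keyBA hN hR hB hA hq hp hAB' g hg hgpos (fun ε r => -(U ε r)) hU' h hh
    have hident : ∀ ε : ℝ, (∫ r in (0:ℝ)..R, h r * rho N R A B p q (U ε) r)
        = ∫ r in (0:ℝ)..R, h r * Fd N R B A q p (fun r => -(U ε r)) r := by
      intro ε
      apply intervalIntegral.integral_congr
      intro s _
      show h s * rho N R A B p q (U ε) s = h s * Fd N R B A q p (fun r => -(U ε r)) s
      congr 1
      rw [hrhoFd]
      unfold Fd
      rw [intExp_neg, intExp_neg]
      simp only [mul_neg, neg_mul, neg_neg]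
      ring
    exact Filter.Tendsto.congr (fun ε => (hident ε).symm) hkey
  · -- B < A
    have hkey := keyBA hN hR hA hB hp hq hAB' g hg hgpos U hU h hh
    have hident : ∀ ε : ℝ, (∫ r in (0:ℝ)..R, h r * rho N R A B p q (U ε) r)
        = -∫ r in (0:ℝ)..R, h r * Fd N R A B p q (U ε) r := by
      intro ε
      rw [← intervalIntegral.integral_neg]
      apply intervalIntegral.integral_congr
      intro s _
      show h s * rho N R A B p q (U ε) s = -(h s * Fd N R A B p q (U ε) s)
      rw [hrhoFd]
      ring
    have hval : R * (B - A) / (N:ℝ) * h R = -(R * (A - B) / (N:ℝ) * h R) := by ring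
    rw [hval]
    exact Filter.Tendsto.congr (fun ε => (hident ε).symm) hkey.neg
end
end
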